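/- arXiv:2605.02226 — 9 statements merged into one kernel-verified Lean document; each statement's English description precedes it below -/
import Mathlib

section
/- Let $G$ be a group in which the centralizer of every infinite-order element is cyclic. If $g, h \in G$ are elements of infinite order such that $g^m = \eta h^n \eta^{-1}$ for some nonzero integers $m, n$ and some $\eta \in G$, then there exists an element $g_0 \in G$ whose centralizer equals the cyclic subgroup generated by $g_0$, and integers $r, s$ such that $g = g_0^r$, $h = \eta^{-1} g_0^s \eta$, and $mr = ns$. -/
/-!
The centralizer of `g ^ m` is cyclic, say `⟨c⟩`. It contains `g` and `η * h * η⁻¹`, whose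
`n`-th power is `g ^ m`, so both are powers of `c`. Anything commuting with `c` commutes with
`g ^ m ∈ ⟨c⟩`, hence lies in `⟨c⟩`: so `c` is primitive. Finally `c` has infinite order because
its power `g` does, and comparing exponents in `c ^ (r * m) = g ^ m = c ^ (s * n)` gives
`m * r = n * s`.
-/

open Subgroup

theorem not_isOfFinOrder_zpow {G : Type*} [Group G] {x : G} (hx : ¬IsOfFinOrder x) {k : ℤ}
    (hk : k ≠ 0) : ¬IsOfFinOrder (x ^ k) := by
  rw [← injective_zpow_iff_not_isOfFinOrder] at hx ⊢
  intro i j hij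
  simp only [← zpow_mul'] at hij
  exact mul_right_cancel₀ hk (hx hij)

theorem centralizer_singleton_eq_zpowers_of_centralizer_eq_zpowers {G : Type*} [Group G]
    {x c : G} (hc : centralizer {x} = zpowers c) : centralizer {c} = zpowers c := by
  refine le_antisymm (fun y hy => ?_) (zpowers_le.mpr (mem_centralizer_singleton_iff.mpr rfl))
  obtain ⟨k, rfl⟩ : x ∈ zpowers c := hc ▸ mem_centralizer_singleton_iff.mpr rfl
  rw [← hc, mem_centralizer_singleton_iff]
  exact (show Commute y c from mem_centralizer_singleton_iff.mp hy).zpow_right k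

theorem conjugate_powers_in_CIC_group_general {G : Type*} [Group G]
    (hCIC : ∀ g : G, ¬ IsOfFinOrder g → IsCyclic ↥(Subgroup.centralizer {g}))
    (g h η : G) (hg : ¬ IsOfFinOrder g)
    (m n : ℤ) (hm : m ≠ 0)
    (hconj : g ^ m = η * h ^ n * η⁻¹) :
    ∃ (g₀ : G) (r s : ℤ),
      Subgroup.centralizer {g₀} = Subgroup.zpowers g₀ ∧
      g = g₀ ^ r ∧ h = η⁻¹ * g₀ ^ s * η ∧ m * r = n * s := by
  obtain ⟨c, hc⟩ := (centralizer {g ^ m}).isCyclic_iff_exists_zpowers_eq_top.mp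
    (hCIC _ (not_isOfFinOrder_zpow hg hm))
  have hconj' : g ^ m = (η * h * η⁻¹) ^ n := by rw [conj_zpow, hconj]
  obtain ⟨r, hr⟩ : g ∈ zpowers c :=
    hc ▸ mem_centralizer_singleton_iff.mpr (Commute.self_zpow g m)
  obtain ⟨s, hs⟩ : η * h * η⁻¹ ∈ zpowers c :=
    hc ▸ mem_centralizer_singleton_iff.mpr (hconj' ▸ Commute.self_zpow _ n)
  dsimp only at hr hs
  have hc_inf : ¬IsOfFinOrder c := fun hfin => hg (hr ▸ hfin.zpow)
  have hrs : r * m = s * n := injective_zpow_iff_not_isOfFinOrder.mpr hc_inf <| by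
    simp only [zpow_mul, hr, hs, hconj']
  refine ⟨c, r, s, centralizer_singleton_eq_zpowers_of_centralizer_eq_zpowers hc.symm, hr.symm,
    by rw [hs]; group, by linarith⟩

/-- In a group where the centralizer of every infinite-order element is
cyclic (the CIC property), if `g, h` have infinite order and `g ^ m = η * h ^ n * η⁻¹`
for nonzero integers `m, n`, then there is a primitive element `g₀` (one whose centralizer
is exactly the cyclic subgroup it generates) and integers `r, s` with `g = g₀ ^ r`,
`h = η⁻¹ * g₀ ^ s * η` and `m * r = n * s`. -/
theorem conjugate_powers_in_CIC_group {G : Type*} [Group G]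
    (hCIC : ∀ g : G, ¬ IsOfFinOrder g → IsCyclic ↥(Subgroup.centralizer {g}))
    (g h η : G) (hg : ¬ IsOfFinOrder g) (hh : ¬ IsOfFinOrder h)
    (m n : ℤ) (hm : m ≠ 0) (hn : n ≠ 0)
    (hconj : g ^ m = η * h ^ n * η⁻¹) :
    ∃ (g₀ : G) (r s : ℤ),
      Subgroup.centralizer {g₀} = Subgroup.zpowers g₀ ∧
      g = g₀ ^ r ∧ h = η⁻¹ * g₀ ^ s * η ∧ m * r = n * s :=
  conjugate_powers_in_CIC_group_general hCIC g h η hg m n hm hconj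
end

section
/- Let $G$ be a finitely generated group (with a fixed word metric $d$) in which the centralizer of any infinite-order element is cyclic, and let $g \in G$ be a primitive element of infinite order (i.e., $C_G(g) = \langle g \rangle$). If $h \in G$ satisfies $\sup_{n \in \mathbb{N}} d(g^n, h g^n) < \infty$, then $h = g^t$ for some integer $t$. -/
/-- Word length of `g` with respect to a generating set `S`. -/
noncomputable def wordLength {G : Type*} [Group G] (S : Set G) (g : G) : ℕ :=
  sInf {n : ℕ | ∃ f : Fin n → G, (∀ i, f i ∈ S) ∧ (List.ofFn f).prod = g}

/-!
Balls of the word metric are finite, so the conjugates `g⁻ⁿ h gⁿ` take only finitely many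
values and two of them coincide: some power `gᵏ`, `k ≠ 0`, commutes with `h`. As `gᵏ` has
infinite order its centralizer is cyclic, hence abelian, and it contains both `g` and `h`.
So `h` centralizes `g`, and the centralizer of the primitive element `g` is `⟨g⟩`.
-/

section WordLength

variable {G : Type*} [Group G] {S : Set G}

lemma wordLength_spec {x : G} (hx : x ∈ Submonoid.closure S) :
    ∃ f : Fin (wordLength S x) → G, (∀ i, f i ∈ S) ∧ (List.ofFn f).prod = x := by
  obtain ⟨l, hlS, rfl⟩ := Submonoid.exists_list_of_mem_closure hx
  refine Nat.sInf_mem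
    (s := {n : ℕ | ∃ f : Fin n → G, (∀ i, f i ∈ S) ∧ (List.ofFn f).prod = l.prod}) ?_
  exact ⟨l.length, l.get, fun i => hlS _ (l.get_mem i), by rw [List.ofFn_get]⟩

lemma finite_setOf_wordLength_le (hS : S.Finite) (hgen : Submonoid.closure S = ⊤) (C : ℕ) :
    {x : G | wordLength S x ≤ C}.Finite := by
  have : Finite S := hS.to_subtype
  refine (Set.finite_iUnion fun n : Fin (C + 1) =>
    Set.finite_range fun f : Fin n → S => (List.ofFn fun i => (f i : G)).prod).subset ?_
  intro x hx
  obtain ⟨f, hfS, hf⟩ := wordLength_spec (hgen ▸ Submonoid.mem_top x : x ∈ Submonoid.closure S)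
  exact Set.mem_iUnion.2 ⟨⟨_, Nat.lt_succ_of_le hx⟩, fun i => ⟨f i, hfS i⟩, hf⟩

end WordLength

lemma Submonoid.closure_eq_top_of_inv_mem {G : Type*} [Group G] {S : Set G}
    (hSsym : ∀ s ∈ S, s⁻¹ ∈ S) (hSgen : Subgroup.closure S = ⊤) :
    Submonoid.closure S = ⊤ := by
  have hS : S ∪ S⁻¹ = S := Set.union_eq_left.2 fun s hs => by simpa using hSsym _ hs
  rw [← hS, ← Subgroup.closure_toSubmonoid, hSgen, Subgroup.top_toSubmonoid]

section Commute

variable {G : Type*} [Group G]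

lemma commute_pow_sub_of_conj_eq {g h : G} {m n : ℕ} (hmn : m ≤ n)
    (heq : (g ^ m)⁻¹ * (h * g ^ m) = (g ^ n)⁻¹ * (h * g ^ n)) : Commute (g ^ (n - m)) h := by
  rw [pow_sub g hmn]
  calc g ^ n * (g ^ m)⁻¹ * h
      = g ^ n * ((g ^ m)⁻¹ * (h * g ^ m)) * (g ^ m)⁻¹ := by group
    _ = h * (g ^ n * (g ^ m)⁻¹) := by rw [heq]; group

lemma exists_pow_commute_of_finite_range_conj {g h : G}
    (hfin : (Set.range fun n : ℕ => (g ^ n)⁻¹ * (h * g ^ n)).Finite) :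
    ∃ k ≠ 0, Commute (g ^ k) h := by
  have : Finite (Set.range fun n : ℕ => (g ^ n)⁻¹ * (h * g ^ n)) := hfin.to_subtype
  obtain ⟨m, n, hmn, heq⟩ := Finite.exists_ne_map_eq_of_infinite
    (Set.rangeFactorization fun n : ℕ => (g ^ n)⁻¹ * (h * g ^ n))
  have heq' := congrArg Subtype.val heq
  rcases Nat.lt_or_gt_of_ne hmn with hlt | hlt
  · exact ⟨n - m, by omega, commute_pow_sub_of_conj_eq hlt.le heq'⟩
  · exact ⟨m - n, by omega, commute_pow_sub_of_conj_eq hlt.le heq'.symm⟩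

lemma Commute.of_isCyclic_centralizer {x g h : G} (hx : IsCyclic (Subgroup.centralizer {x}))
    (hg : Commute x g) (hh : Commute x h) : Commute g h := by
  let _ := hx.commGroup
  have hmem : ∀ {y}, Commute x y → y ∈ Subgroup.centralizer {x} := fun hy =>
    Subgroup.mem_centralizer_singleton_iff.2 hy.eq.symm
  exact congrArg Subtype.val (mul_comm (⟨g, hmem hg⟩ : Subgroup.centralizer {x}) ⟨h, hmem hh⟩)

end Commute

/-- Let `G` be a finitely generated group (with word metric for a finite
symmetric generating set `S`) in which the centralizer of any infinite-order element is
cyclic, and let `g` be a primitive element of infinite order. If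
`sup_n d(g ^ n, h * g ^ n) < ∞` then `h = g ^ t` for some integer `t`. -/
theorem eq_power_of_bounded_distance {G : Type*} [Group G]
    (S : Set G) (hSfin : S.Finite) (hSsym : ∀ s ∈ S, s⁻¹ ∈ S)
    (hSgen : Subgroup.closure S = ⊤)
    (hCIC : ∀ g : G, ¬ IsOfFinOrder g → IsCyclic ↥(Subgroup.centralizer {g}))
    (g : G) (hg : ¬ IsOfFinOrder g)
    (hprim : Subgroup.centralizer {g} = Subgroup.zpowers g)
    (h : G) (C : ℕ)
    (hbd : ∀ n : ℕ, wordLength S ((g ^ n)⁻¹ * (h * g ^ n)) ≤ C) :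
    ∃ t : ℤ, h = g ^ t := by
  have hfin : (Set.range fun n : ℕ => (g ^ n)⁻¹ * (h * g ^ n)).Finite :=
    (finite_setOf_wordLength_le hSfin (Submonoid.closure_eq_top_of_inv_mem hSsym hSgen) C).subset
      (Set.range_subset_iff.2 hbd)
  obtain ⟨k, hk, hcomm⟩ := exists_pow_commute_of_finite_range_conj hfin
  have hgk : ¬ IsOfFinOrder (g ^ k) := by simpa [isOfFinOrder_pow, hk] using hg
  have hgh : Commute g h :=
    Commute.of_isCyclic_centralizer (hCIC _ hgk) (Commute.self_pow g k).symm hcomm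
  have hh : h ∈ Subgroup.zpowers g :=
    hprim ▸ Subgroup.mem_centralizer_singleton_iff.2 hgh.eq.symm
  obtain ⟨t, ht⟩ := Subgroup.mem_zpowers_iff.1 hh
  exact ⟨t, ht.symm⟩
end

section
/- Let $(b_v)_{v \in \mathbb{Z}^d}$ be a family of integers with $b_{\mathbf{0}} = 0$, and suppose there is a group homomorphism $\phi : \mathbb{Z}^d \to \mathbb{Z}$ and a constant $K$ with $K < \frac{1}{4}\min\{|\phi(e_i)| : \phi(e_i) \neq 0\}$ such that $\big| |b_v - b_w| - |\phi(v - w)| \big| \leq K$ for all $v, w \in \mathbb{Z}^d$. Then there exist signs $\epsilon_1, \dots, \epsilon_d \in \{-1, 1\}$ such that the homomorphism $\theta(v_1, \dots, v_d) := \sum_{i=1}^d \epsilon_i \phi(v_i e_i)$ satisfies $|b_v - \theta(v)| \leq 2Kd$ for all $v \in \mathbb{Z}^d$. -/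
/-!
Along each coordinate direction `e` with `φ e ≠ 0`, the map `n ↦ b (v + n • e)` is a rough
isometric embedding of `ℤ` scaled by `|φ e|`. Three consecutive points cannot turn back (the outer
distance would be `≈ 0` instead of `≈ 2|φ e|`), so every such line is strictly monotone and hence
within `K` of `n ↦ ± n |φ e|`. Parallel lines stay at bounded distance `|φ v| + K`, so they all
run in the same direction, which gives one sign per coordinate. Walking from `0` to `v` one
coordinate at a time then costs at most `K` per coordinate.
-/

open Finset

def IsRoughIsometry (f : ℤ → ℝ) (c K : ℝ) : Prop :=
  ∀ n m : ℤ, |(|f n - f m| - c * |(n : ℝ) - m|)| ≤ K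

lemma pos_of_forall_mul_succ_pos {g : ℤ → ℝ} (hg : ∀ x, 0 < g x * g (x + 1)) (h0 : 0 < g 0) :
    ∀ x, 0 < g x := by
  intro x
  induction x using Int.induction_on with
  | zero => exact h0
  | succ i ih => exact pos_of_mul_pos_right (hg i) ih.le
  | pred i ih => exact pos_of_mul_pos_left (by simpa using hg (-(i : ℤ) - 1)) ih.le

namespace IsRoughIsometry

variable {f : ℤ → ℝ} {c K : ℝ}

lemma nonneg (hf : IsRoughIsometry f c K) : 0 ≤ K := by
  simpa using hf 0 0

lemma neg (hf : IsRoughIsometry f c K) : IsRoughIsometry (fun n => -f n) c K := by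
  intro n m
  simpa only [neg_sub_neg, abs_sub_comm (f m)] using hf n m

lemma mul_succ_sub_pos (hf : IsRoughIsometry f c K) (h3 : 3 * K < 2 * c) (x : ℤ) :
    0 < (f (x + 1) - f x) * (f (x + 1 + 1) - f (x + 1)) := by
  have hK := hf.nonneg
  have hp := hf (x + 1) x
  have hq := hf (x + 1 + 1) (x + 1)
  have hr := hf (x + 1 + 1) x
  rw [show ((x + 1 : ℤ) : ℝ) - x = 1 by push_cast; ring] at hp
  rw [show ((x + 1 + 1 : ℤ) : ℝ) - (x + 1 : ℤ) = 1 by push_cast; ring] at hq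
  rw [show ((x + 1 + 1 : ℤ) : ℝ) - x = 2 by push_cast; ring] at hr
  norm_num at hp hq hr
  rw [abs_le] at hp hq hr
  -- Steps of opposite signs would give `|f (x + 2) - f x| ≤ 2 * K`, against `≥ 2 * c - K`.
  by_contra! hpq
  rcases le_total 0 (f (x + 1) - f x) with hp0 | hp0 <;>
    rcases le_total 0 (f (x + 1 + 1) - f (x + 1)) with hq0 | hq0 <;>
    simp only [abs_of_nonneg, abs_of_nonpos, hp0, hq0] at hp hq <;>
    rcases abs_cases (f (x + 1 + 1) - f x) with ⟨hr0, -⟩ | ⟨hr0, -⟩ <;>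
    rw [hr0] at hr <;> nlinarith

lemma strictMono_or_strictAnti (hf : IsRoughIsometry f c K) (h3 : 3 * K < 2 * c) :
    StrictMono f ∨ StrictAnti f := by
  have hg := hf.mul_succ_sub_pos h3
  rcases lt_or_gt_of_ne (left_ne_zero_of_mul (hg 0).ne') with h0 | h0
  · refine .inr (strictAnti_int_of_succ_lt fun x => ?_)
    have := pos_of_forall_mul_succ_pos (g := fun x => -(f (x + 1) - f x))
      (fun x => by simpa only [neg_mul_neg] using hg x) (by simpa using h0) x
    linarith
  · exact .inl (strictMono_int_of_lt_succ fun x =>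
      sub_pos.1 (pos_of_forall_mul_succ_pos (g := fun x => f (x + 1) - f x) hg h0 x))

lemma abs_sub_sub_le_of_strictMono (hf : IsRoughIsometry f c K) (hmono : StrictMono f) (n : ℤ) :
    |f n - f 0 - n * c| ≤ K := by
  have h := hf n 0
  push_cast at h
  rw [sub_zero] at h
  rcases le_or_gt 0 n with hn | hn
  · rw [abs_of_nonneg (sub_nonneg.2 (hmono.monotone hn)),
      abs_of_nonneg (Int.cast_nonneg hn)] at h
    rwa [mul_comm]
  · rw [abs_of_neg (sub_neg.2 (hmono hn)), abs_of_neg (Int.cast_lt_zero.2 hn)] at h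
    rw [← abs_neg]
    convert h using 2
    ring

lemma exists_units_abs_sub_sub_le (hf : IsRoughIsometry f c K) (h3 : 3 * K < 2 * c) :
    ∃ σ : ℤˣ, ∀ n, |f n - f 0 - σ * (n * c)| ≤ K := by
  rcases hf.strictMono_or_strictAnti h3 with hmono | hanti
  · exact ⟨1, by simpa using hf.abs_sub_sub_le_of_strictMono hmono⟩
  · refine ⟨-1, fun n => ?_⟩
    rw [← abs_neg]
    convert hf.neg.abs_sub_sub_le_of_strictMono hanti.neg n using 2
    push_cast
    ring

end IsRoughIsometry

lemma eq_zero_of_forall_abs_mul_natCast_le {a M : ℝ} (h : ∀ n : ℕ, |a * n| ≤ M) : a = 0 := by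
  by_contra ha
  obtain ⟨n, hn⟩ := exists_nat_gt (M / |a|)
  have hM := h n
  rw [abs_mul, Nat.abs_cast] at hM
  rw [div_lt_iff₀ (abs_pos.2 ha)] at hn
  linarith

lemma units_eq_of_abs_sub_le {f g : ℤ → ℝ} {c K B : ℝ} (hc : c ≠ 0) {σ τ : ℤˣ}
    (hf : ∀ n, |f n - f 0 - σ * (n * c)| ≤ K) (hg : ∀ n, |g n - g 0 - τ * (n * c)| ≤ K)
    (hfg : ∀ n, |f n - g n| ≤ B) : σ = τ := by
  have h : ((σ : ℤ) - τ : ℝ) * c = 0 := by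
    refine eq_zero_of_forall_abs_mul_natCast_le (M := 2 * K + 2 * B) fun n => abs_le.2 ?_
    have h1 := abs_le.1 (hf n)
    have h2 := abs_le.1 (hg n)
    have h3 := abs_le.1 (hfg n)
    have h4 := abs_le.1 (hfg 0)
    push_cast at h1 h2
    constructor <;> linarith
  rw [mul_eq_zero, or_iff_left hc, sub_eq_zero, Int.cast_inj] at h
  exact Units.ext h

theorem exists_units_abs_add_zsmul_sub_le {G : Type*} [AddCommGroup G] {b : G → ℝ} {φ : G →+ ℝ}
    {K : ℝ} (hLip : ∀ v w, |(|b v - b w| - |φ (v - w)|)| ≤ K) {e : G}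
    (he : φ e ≠ 0 → 3 * K < 2 * |φ e|) :
    ∃ s : ℤˣ, ∀ v (n : ℤ), |b (v + n • e) - b v - s * φ (n • e)| ≤ K := by
  by_cases h0 : φ e = 0
  · exact ⟨1, fun v n => by simpa [h0] using hLip (v + n • e) v⟩
  have hline : ∀ v, IsRoughIsometry (fun n : ℤ => b (v + n • e)) |φ e| K := fun v n m => by
    have h := hLip (v + n • e) (v + m • e)
    rwa [add_sub_add_left_eq_sub, ← sub_smul, map_zsmul, zsmul_eq_mul, abs_mul, mul_comm,
      Int.cast_sub] at h
  choose σ hσ using fun v => (hline v).exists_units_abs_sub_sub_le (he h0)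
  have hσ0 : ∀ v, σ v = σ 0 := fun v =>
    units_eq_of_abs_sub_le (abs_ne_zero.2 h0) (hσ v) (hσ 0) (B := |φ v| + K) fun n => by
      have h := (abs_le.1 (hLip (v + n • e) (0 + n • e))).2
      rw [add_sub_add_right_eq_sub, sub_zero] at h
      simp only [zero_add] at h ⊢
      linarith
  obtain ⟨t, ht⟩ : ∃ t : ℤˣ, |φ e| = t * φ e := by
    rcases le_total 0 (φ e) with h | h
    exacts [⟨1, by simp [abs_of_nonneg h]⟩, ⟨-1, by simp [abs_of_nonpos h]⟩]
  refine ⟨σ 0 * t, fun v n => ?_⟩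
  have h := hσ v n
  simp only [zero_smul, add_zero, hσ0 v] at h
  rw [map_zsmul, zsmul_eq_mul]
  convert h using 2
  push_cast
  rw [ht]
  ring

theorem abs_sub_sum_le_card_mul {ι G : Type*} [AddCommGroup G] {b : G → ℝ} {x : ι → G}
    {t : ι → ℝ} {K : ℝ} (h : ∀ i v, |b (v + x i) - b v - t i| ≤ K) (s : Finset ι) :
    |b (∑ i ∈ s, x i) - b 0 - ∑ i ∈ s, t i| ≤ #s * K := by
  classical
  induction s using Finset.induction_on with
  | empty => simp
  | insert i s hi ih =>
    rw [sum_insert hi, sum_insert hi, card_insert_of_notMem hi, add_comm (x i)]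
    calc _ = |(b (∑ j ∈ s, x j + x i) - b (∑ j ∈ s, x j) - t i)
            + (b (∑ j ∈ s, x j) - b 0 - ∑ j ∈ s, t j)| := by ring_nf
      _ ≤ K + #s * K := (abs_add_le _ _).trans (add_le_add (h _ _) ih)
      _ = _ := by push_cast; ring

/-- Let `(b v)_{v ∈ ℤ^d}` be integers with `b 0 = 0`, and suppose there is a
homomorphism `φ : ℤ^d → ℤ` and a constant `K < (1/4) * min {|φ(eᵢ)| : φ(eᵢ) ≠ 0}` such that
`||b v - b w| - |φ (v - w)|| ≤ K` for all `v, w`. Then there are signs `εᵢ ∈ {±1}` such that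
the homomorphism `θ v = ∑ i, εᵢ • φ (vᵢ • eᵢ)` satisfies `|b v - θ v| ≤ 2 K d` for all `v`. -/
theorem quasi_hom_close_to_hom (d : ℕ) (b : (Fin d → ℤ) → ℤ)
    (hb0 : b 0 = 0) (φ : ((Fin d → ℤ)) →+ ℤ) (K : ℝ)
    (hK : ∀ i : Fin d, φ (Pi.single i 1) ≠ 0 →
      K < (1 / 4) * |((φ (Pi.single i 1) : ℤ) : ℝ)|)
    (hLip : ∀ v w : Fin d → ℤ,
      |((|b v - b w| : ℤ) : ℝ) - ((|φ (v - w)| : ℤ) : ℝ)| ≤ K) :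
    ∃ ε : Fin d → ℤ, (∀ i, ε i = 1 ∨ ε i = -1) ∧
      ∀ v : Fin d → ℤ,
        ((|b v - ∑ i, ε i * φ (Pi.single i (v i))| : ℤ) : ℝ) ≤ 2 * K * d := by
  have hK0 : 0 ≤ K := by simpa using hLip 0 0
  set φℝ := (Int.castAddHom ℝ).comp φ
  have hLipℝ : ∀ v w, |(|(b v : ℝ) - b w| - |φℝ (v - w)|)| ≤ K := fun v w => by
    simpa [φℝ] using hLip v w
  have hdir (i : Fin d) := exists_units_abs_add_zsmul_sub_le hLipℝ (e := Pi.single i 1) fun h => by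
    have := hK i (by simpa [φℝ] using h)
    simp only [φℝ, AddMonoidHom.coe_comp, Function.comp_apply, Int.coe_castAddHom] at this ⊢
    linarith [abs_nonneg ((φ (Pi.single i 1) : ℤ) : ℝ)]
  choose s hs using hdir
  refine ⟨fun i => s i, fun i => by rcases Int.units_eq_one_or (s i) with h | h <;> simp [h],
    fun v => ?_⟩
  have h := abs_sub_sum_le_card_mul (b := fun v => (b v : ℝ)) (x := fun i => Pi.single i (v i))
    (t := fun i => s i * φℝ (Pi.single i (v i))) (fun i w => by
      simpa [← Pi.single_smul'] using hs i w (v i)) univ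
  rw [univ_sum_single, hb0] at h
  simp only [φℝ, AddMonoidHom.coe_comp, Function.comp_apply, Int.coe_castAddHom, card_univ,
    Fintype.card_fin, Int.cast_zero, sub_zero] at h
  push_cast
  exact h.trans (by nlinarith [d.cast_nonneg (α := ℝ)])
end

section
/- If a box $R$ in $\mathbb{R}^2$ with integer sidelengths $l \times b$ can be tiled by translates of the boxes $R_1$ (of size $m \times 1$) and $R_2$ (of size $1 \times n$), where the corners of all tiles lie on the integer lattice, then either $m$ divides $l$ or $n$ divides $b$; consequently, either $R$ can be tiled by $R_1$ alone or $R$ can be tiled by $R_2$ alone. -/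
/-- The horizontal `m × 1` box with lower-left lattice cell `t`. -/
def htile (m : ℕ) (t : ℤ × ℤ) : Set (ℤ × ℤ) :=
  {p | t.1 ≤ p.1 ∧ p.1 < t.1 + m ∧ p.2 = t.2}

/-- The vertical `1 × n` box with lower-left lattice cell `t`. -/
def vtile (n : ℕ) (t : ℤ × ℤ) : Set (ℤ × ℤ) :=
  {p | p.1 = t.1 ∧ t.2 ≤ p.2 ∧ p.2 < t.2 + n}

/-- The `l × b` box of lattice cells. -/
def rectBox (l b : ℕ) : Set (ℤ × ℤ) :=
  {p | 0 ≤ p.1 ∧ p.1 < l ∧ 0 ≤ p.2 ∧ p.2 < b}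

/-- `A` is the set of lower-left corners of horizontal `m × 1` tiles and `B` the set of
lower-left corners of vertical `1 × n` tiles of a tiling of the `l × b` box: every tile is
contained in the box, and every cell of the box is covered by exactly one tile. -/
def IsTiling (m n l b : ℕ) (A B : Set (ℤ × ℤ)) : Prop :=
  (∀ q ∈ A, htile m q ⊆ rectBox l b) ∧
  (∀ q ∈ B, vtile n q ⊆ rectBox l b) ∧
  ∀ p ∈ rectBox l b, ∃! t : (ℤ × ℤ) ⊕ (ℤ × ℤ),
    Sum.elim (fun q => q ∈ A ∧ p ∈ htile m q) (fun q => q ∈ B ∧ p ∈ vtile n q) t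

/-!
Give the cell `(x, y)` the weight `ω ^ x * ζ ^ y`, where `ω` and `ζ` are primitive `m`-th and
`n`-th roots of unity. Every `m × 1` and every `1 × n` tile has weight zero, hence so does the
tiled box; but the weight of the box is `(∑ x < l, ω ^ x) * (∑ y < b, ζ ^ y)`, and these
geometric sums vanish only when `m ∣ l`, resp. `n ∣ b`. Conversely, if `m ∣ l` the box is cut
into `m × 1` tiles whose first coordinates are multiples of `m`, and symmetrically if `n ∣ b`.
-/

open Finset

theorem finsum_mem_eq_finsum_finsum_mem_of_existsUnique {α ι M : Type*} [AddCommMonoid M]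
    {f : α → M} {s : Set α} {I : Set ι} {t : ι → Set α} (hI : I.Finite)
    (ht : ∀ i ∈ I, (t i).Finite) (hts : ∀ i ∈ I, t i ⊆ s)
    (hcov : ∀ a ∈ s, ∃! i, i ∈ I ∧ a ∈ t i) :
    ∑ᶠ a ∈ s, f a = ∑ᶠ i ∈ I, ∑ᶠ a ∈ t i, f a := by
  have hs : s = ⋃ i ∈ I, t i := by
    refine subset_antisymm (fun a ha => ?_) (Set.iUnion₂_subset hts)
    obtain ⟨i, ⟨hi, hai⟩, -⟩ := hcov a ha
    exact Set.mem_biUnion hi hai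
  have hdisj : I.PairwiseDisjoint t := fun i hi j hj hij =>
    Set.disjoint_left.2 fun a hai haj =>
      hij ((hcov a (hts i hi hai)).unique ⟨hi, hai⟩ ⟨hj, haj⟩)
  rw [hs, finsum_mem_biUnion hdisj hI ht]

theorem Int.sum_Ico_add_natCast {M : Type*} [AddCommMonoid M] (f : ℤ → M) (a : ℤ) (k : ℕ) :
    ∑ x ∈ Ico a (a + k), f x = ∑ i ∈ Finset.range k, f (a + i) := by
  rw [Int.Ico_eq_finset_map, sum_map]
  simp

namespace IsPrimitiveRoot

variable {K : Type*} [Field K] {ω : K} {m : ℕ}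

theorem sum_zpow_Ico_eq_zero (hω : IsPrimitiveRoot ω m) (hm : 1 < m) (a : ℤ) :
    ∑ x ∈ Ico a (a + m), ω ^ x = 0 := by
  have hω0 : ω ≠ 0 := hω.ne_zero (by omega)
  simp_rw [Int.sum_Ico_add_natCast, zpow_add₀ hω0, zpow_natCast, ← mul_sum,
    hω.geom_sum_eq_zero hm, mul_zero]

theorem dvd_of_sum_zpow_Ico_eq_zero (hω : IsPrimitiveRoot ω m) {l : ℕ}
    (h : ∑ x ∈ Ico 0 (l : ℤ), ω ^ x = 0) : m ∣ l := by
  rw [← zero_add (l : ℤ), Int.sum_Ico_add_natCast] at h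
  simp_rw [zero_add, zpow_natCast] at h
  have h1 := mul_neg_geom_sum ω l
  rw [h, mul_zero, eq_comm, sub_eq_zero, eq_comm] at h1
  exact hω.dvd_of_pow_eq_one l h1

end IsPrimitiveRoot

theorem finsum_mem_product_zpow_mul_zpow {K : Type*} [Field K] (ω ζ : K) (s t : Finset ℤ) :
    ∑ᶠ p ∈ (s : Set ℤ) ×ˢ (t : Set ℤ), ω ^ p.1 * ζ ^ p.2 =
      (∑ x ∈ s, ω ^ x) * ∑ y ∈ t, ζ ^ y := by
  rw [← coe_product, finsum_mem_coe_finset, sum_product, sum_mul_sum]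

section Tiles

variable {m n l b : ℕ}

theorem htile_eq_prod (q : ℤ × ℤ) : htile m q = Set.Ico q.1 (q.1 + m) ×ˢ {q.2} := by
  ext p
  simp [htile, and_assoc]

theorem vtile_eq_prod (q : ℤ × ℤ) : vtile n q = {q.1} ×ˢ Set.Ico q.2 (q.2 + n) := by
  ext p
  simp [vtile]

theorem rectBox_eq_prod : rectBox l b = Set.Ico 0 (l : ℤ) ×ˢ Set.Ico 0 (b : ℤ) := by
  ext p
  simp [rectBox, and_assoc]

theorem rectBox_finite : (rectBox l b).Finite := by
  rw [rectBox_eq_prod]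
  exact (Set.finite_Ico _ _).prod (Set.finite_Ico _ _)

theorem self_mem_htile (hm : 0 < m) (q : ℤ × ℤ) : q ∈ htile m q := by
  simp [htile_eq_prod, hm]

theorem self_mem_vtile (hn : 0 < n) (q : ℤ × ℤ) : q ∈ vtile n q := by
  simp [vtile_eq_prod, hn]

end Tiles

namespace IsTiling

variable {m n l b : ℕ} {A B : Set (ℤ × ℤ)}

theorem finsum_mem_rectBox_eq_zero {M : Type*} [AddCommMonoid M] {f : ℤ × ℤ → M}
    (hm : 0 < m) (hn : 0 < n) (hT : IsTiling m n l b A B)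
    (hA : ∀ q ∈ A, ∑ᶠ p ∈ htile m q, f p = 0) (hB : ∀ q ∈ B, ∑ᶠ p ∈ vtile n q, f p = 0) :
    ∑ᶠ p ∈ rectBox l b, f p = 0 := by
  obtain ⟨hAbox, hBbox, hcov⟩ := hT
  have hAfin : A.Finite := rectBox_finite.subset fun q hq => hAbox q hq (self_mem_htile hm q)
  have hBfin : B.Finite := rectBox_finite.subset fun q hq => hBbox q hq (self_mem_vtile hn q)
  have hts : ∀ i ∈ Sum.inl '' A ∪ Sum.inr '' B,
      Sum.elim (htile m) (vtile n) i ⊆ rectBox l b := by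
    rintro _ (⟨q, hq, rfl⟩ | ⟨q, hq, rfl⟩)
    exacts [hAbox q hq, hBbox q hq]
  rw [finsum_mem_eq_finsum_finsum_mem_of_existsUnique ((hAfin.image _).union (hBfin.image _))
    (fun i hi => rectBox_finite.subset (hts i hi)) hts
    (fun p hp => (existsUnique_congr fun i => by cases i <;> simp).1 (hcov p hp))]
  refine finsum_mem_eq_zero_of_forall_eq_zero ?_
  rintro _ (⟨q, hq, rfl⟩ | ⟨q, hq, rfl⟩)
  exacts [hA q hq, hB q hq]

theorem dvd_or_dvd (hm : 1 < m) (hn : 1 < n) (hT : IsTiling m n l b A B) : m ∣ l ∨ n ∣ b := by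
  obtain ⟨ω, hω⟩ : ∃ ω : ℂ, IsPrimitiveRoot ω m := ⟨_, Complex.isPrimitiveRoot_exp m (by omega)⟩
  obtain ⟨ζ, hζ⟩ : ∃ ζ : ℂ, IsPrimitiveRoot ζ n := ⟨_, Complex.isPrimitiveRoot_exp n (by omega)⟩
  have hbox : ∑ᶠ p ∈ rectBox l b, ω ^ p.1 * ζ ^ p.2 = 0 := by
    refine hT.finsum_mem_rectBox_eq_zero (by omega) (by omega) (fun q _ => ?_) (fun q _ => ?_)
    · rw [htile_eq_prod, ← coe_Ico, ← coe_singleton, finsum_mem_product_zpow_mul_zpow,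
        hω.sum_zpow_Ico_eq_zero hm, zero_mul]
    · rw [vtile_eq_prod, ← coe_Ico, ← coe_singleton, finsum_mem_product_zpow_mul_zpow,
        hζ.sum_zpow_Ico_eq_zero hn, mul_zero]
  rw [rectBox_eq_prod, ← coe_Ico, ← coe_Ico, finsum_mem_product_zpow_mul_zpow] at hbox
  exact (mul_eq_zero.1 hbox).imp hω.dvd_of_sum_zpow_Ico_eq_zero hζ.dvd_of_sum_zpow_Ico_eq_zero

end IsTiling

namespace Int

theorem eq_of_dvd_of_mem_Ico {m a c p : ℤ} (ha : m ∣ a) (hc : m ∣ c)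
    (hpa : p ∈ Set.Ico a (a + m)) (hpc : p ∈ Set.Ico c (c + m)) : a = c := by
  obtain ⟨h1, h2⟩ := hpa
  obtain ⟨h3, h4⟩ := hpc
  have := eq_zero_of_abs_lt_dvd (dvd_sub ha hc) (abs_lt.2 ⟨by omega, by omega⟩)
  omega

theorem existsUnique_dvd_mem_Ico {m l p : ℤ} (hm : 0 < m) (hp : p ∈ Set.Ico 0 l) :
    ∃! a, (a ∈ Set.Ico 0 l ∧ m ∣ a) ∧ p ∈ Set.Ico a (a + m) := by
  obtain ⟨hp0, hpl⟩ := hp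
  have h := mul_ediv_add_emod p m
  have h0 := emod_nonneg p hm.ne'
  have hlt := emod_lt_of_pos p hm
  have ha0 : 0 ≤ m * (p / m) := mul_nonneg hm.le (ediv_nonneg hp0 hm.le)
  refine ⟨m * (p / m), ⟨⟨⟨ha0, by omega⟩, dvd_mul_right _ _⟩, by omega, by omega⟩,
    fun c ⟨⟨_, hc⟩, hpc⟩ => ?_⟩
  exact eq_of_dvd_of_mem_Ico hc (dvd_mul_right _ _) hpc ⟨by omega, by omega⟩

theorem Ico_add_subset_Ico_of_dvd {m a l : ℤ} (ha : a ∈ Set.Ico 0 l) (hma : m ∣ a)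
    (hml : m ∣ l) : Set.Ico a (a + m) ⊆ Set.Ico 0 l := by
  have : m ≤ l - a := le_of_dvd (by linarith [ha.2]) (dvd_sub hml hma)
  exact Set.Ico_subset_Ico ha.1 (by linarith)

end Int

section Construction

variable {m n l b : ℕ}

theorem isTiling_horizontal_of_dvd (hm : 0 < m) (hml : m ∣ l) :
    IsTiling m n l b ({a ∈ Set.Ico 0 (l : ℤ) | (m : ℤ) ∣ a} ×ˢ Set.Ico 0 (b : ℤ)) ∅ := by
  refine ⟨?_, by simp, ?_⟩
  · rintro ⟨a, y⟩ ⟨ha, hy⟩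
    rw [htile_eq_prod, rectBox_eq_prod]
    exact Set.prod_mono (Int.Ico_add_subset_Ico_of_dvd ha.1 ha.2 (by exact_mod_cast hml))
      (Set.singleton_subset_iff.2 hy)
  · rintro ⟨x, y⟩ hp
    rw [rectBox_eq_prod] at hp
    obtain ⟨a, ⟨ha, hxa⟩, huniq⟩ := Int.existsUnique_dvd_mem_Ico (m := m) (by omega) hp.1
    refine ⟨Sum.inl (a, y), ⟨⟨ha, hp.2⟩, by simp [htile_eq_prod, hxa]⟩, ?_⟩
    rintro (⟨a', y'⟩ | q) ⟨hq, hpq⟩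
    · rw [htile_eq_prod] at hpq
      obtain ⟨hxa', rfl : y = y'⟩ := hpq
      rw [huniq a' ⟨hq.1, hxa'⟩]
    · exact absurd hq (Set.notMem_empty q)

theorem isTiling_vertical_of_dvd (hn : 0 < n) (hnb : n ∣ b) :
    IsTiling m n l b ∅ (Set.Ico 0 (l : ℤ) ×ˢ {a ∈ Set.Ico 0 (b : ℤ) | (n : ℤ) ∣ a}) := by
  refine ⟨by simp, ?_, ?_⟩
  · rintro ⟨x, a⟩ ⟨hx, ha⟩
    rw [vtile_eq_prod, rectBox_eq_prod]
    exact Set.prod_mono (Set.singleton_subset_iff.2 hx)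
      (Int.Ico_add_subset_Ico_of_dvd ha.1 ha.2 (by exact_mod_cast hnb))
  · rintro ⟨x, y⟩ hp
    rw [rectBox_eq_prod] at hp
    obtain ⟨a, ⟨ha, hya⟩, huniq⟩ := Int.existsUnique_dvd_mem_Ico (m := n) (by omega) hp.2
    refine ⟨Sum.inr (x, a), ⟨⟨hp.1, ha⟩, by simp [vtile_eq_prod, hya]⟩, ?_⟩
    rintro (q | ⟨x', a'⟩) ⟨hq, hpq⟩
    · exact absurd hq (Set.notMem_empty q)
    · rw [vtile_eq_prod] at hpq
      obtain ⟨rfl : x = x', hya'⟩ := hpq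
      rw [huniq a' ⟨hq.2, hya'⟩]

end Construction

theorem tiled_box_divisibility_general (m n l b : ℕ) (hm : 1 < m) (hn : 1 < n)
    (htiled : ∃ A B : Set (ℤ × ℤ), IsTiling m n l b A B) :
    (m ∣ l ∨ n ∣ b) ∧
      ((∃ A : Set (ℤ × ℤ), IsTiling m n l b A ∅) ∨
        (∃ B : Set (ℤ × ℤ), IsTiling m n l b ∅ B)) := by
  obtain ⟨A, B, hT⟩ := htiled
  have hdvd := hT.dvd_or_dvd hm hn
  exact ⟨hdvd, hdvd.imp (fun h => ⟨_, isTiling_horizontal_of_dvd (by omega) h⟩)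
    (fun h => ⟨_, isTiling_vertical_of_dvd (by omega) h⟩)⟩

/-- If an `l × b` box (integer sidelengths) can be tiled by translates of the
`m × 1` box `R₁` and the `1 × n` box `R₂` (with `m, n > 1`, corners on the lattice), then
`m ∣ l` or `n ∣ b`; consequently the box can be tiled by `R₁` alone or by `R₂` alone. -/
theorem tiled_box_divisibility (m n l b : ℕ) (hm : 1 < m) (hn : 1 < n)
    (hl : 0 < l) (hb : 0 < b)
    (htiled : ∃ A B : Set (ℤ × ℤ), IsTiling m n l b A B) :
    (m ∣ l ∨ n ∣ b) ∧
      ((∃ A : Set (ℤ × ℤ), IsTiling m n l b A ∅) ∨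
        (∃ B : Set (ℤ × ℤ), IsTiling m n l b ∅ B)) :=
  tiled_box_divisibility_general m n l b hm hn htiled
end

section
/- Let $X \subseteq \mathcal{A}^{\mathbb{Z}}$ be a strongly irreducible subshift over a finite alphabet $\mathcal{A}$. Then there exists $N_0 \in \mathbb{N}$ such that for every $N \geq N_0$, $X$ contains a point of period $N$, i.e., an element $x \in X$ with $x_i = x_{i+N}$ for all $i \in \mathbb{Z}$. -/
/-!
A strongly irreducible subshift has a synchronizing word `w`. For `N ≥ |w| + k + 1`, strong
irreducibility fills a gap of length `N - |w|` between two copies of `w`, giving an allowed word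
`w g w`. Synchronization then chains copies of `w g` along `w` indefinitely, so every window of
the `N`-periodic point with period word `w g` is allowed, and since `X` is closed that point
lies in `X`.
-/

open Filter Topology

namespace Subshift

variable {A : Type*} {X : Set (ℤ → A)} {k : ℕ}

def IsShiftInvariant (X : Set (ℤ → A)) : Prop :=
  ∀ x ∈ X, ∀ n : ℤ, (fun i => x (i + n)) ∈ X

def IsStronglyIrreducible (X : Set (ℤ → A)) (k : ℕ) : Prop :=
  ∀ F F' : Set ℤ, (∀ i ∈ F, ∀ j ∈ F', (k : ℤ) < |i - j|) →
    ∀ x ∈ X, ∀ y ∈ X, ∃ z ∈ X, (∀ i ∈ F, z i = x i) ∧ (∀ j ∈ F', z j = y j)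

def window (x : ℤ → A) (a : ℤ) (n : ℕ) : List A :=
  List.ofFn fun i : Fin n => x (a + i)

section window

variable {x y : ℤ → A} {a : ℤ} {m n : ℕ}

@[simp]
theorem length_window : (window x a n).length = n := List.length_ofFn

theorem window_eq_window_iff {b : ℤ} :
    window x a n = window y b n ↔ ∀ i < n, x (a + i) = y (b + i) := by
  simp [window, List.ofFn_inj, funext_iff, Fin.forall_iff]

theorem window_add : window x a (m + n) = window x a m ++ window x (a + m) n := by
  simp [window, List.ofFn_add, add_assoc]

theorem window_add_period {c : ℕ} (hx : Function.Periodic x c) :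
    window x a (c + n) = window x a c ++ window x a n := by
  rw [window_add]
  congr 1
  exact window_eq_window_iff.2 fun i _ => by rw [add_right_comm, hx]

theorem window_shift (c : ℤ) : window (fun i => x (i + c)) a n = window x (a + c) n := by
  simp [window, add_right_comm]

end window

def Allowed (X : Set (ℤ → A)) (w : List A) : Prop :=
  ∃ x ∈ X, window x 0 w.length = w

theorem allowed_nil (hne : X.Nonempty) : Allowed X ([] : List A) :=
  ⟨hne.some, hne.some_mem, rfl⟩

theorem allowed_window (hshift : IsShiftInvariant X) {x : ℤ → A} (hx : x ∈ X) (a : ℤ)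
    (n : ℕ) : Allowed X (window x a n) :=
  ⟨_, hshift x hx a, by rw [length_window, window_shift, zero_add]⟩

theorem Allowed.exists_window_eq (hshift : IsShiftInvariant X) {w : List A}
    (h : Allowed X w) (a : ℤ) : ∃ x ∈ X, window x a w.length = w := by
  obtain ⟨x, hx, hxw⟩ := h
  exact ⟨_, hshift x hx (-a), by rwa [window_shift, add_neg_cancel]⟩

theorem Allowed.of_append_left {u v : List A} (h : Allowed X (u ++ v)) : Allowed X u := by
  obtain ⟨x, hx, hxw⟩ := h
  rw [List.length_append, window_add] at hxw
  exact ⟨x, hx, (List.append_inj hxw length_window).1⟩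

theorem Allowed.of_append_right (hshift : IsShiftInvariant X) {u v : List A}
    (h : Allowed X (u ++ v)) : Allowed X v := by
  obtain ⟨x, hx, hxw⟩ := h
  rw [List.length_append, window_add] at hxw
  exact (List.append_inj hxw length_window).2 ▸ allowed_window hshift hx _ _

def gaps (X : Set (ℤ → A)) (d : ℕ) (a b : List A) : Set (List A) :=
  {g | g.length = d ∧ Allowed X (a ++ g ++ b)}

theorem gaps_finite [Finite A] (d : ℕ) (a b : List A) : (gaps X d a b).Finite :=
  (List.finite_length_eq A d).subset fun _ hg => hg.1

theorem gaps_append_subset (hshift : IsShiftInvariant X) (d : ℕ) (u a b v : List A) :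
    gaps X d (u ++ a) (b ++ v) ⊆ gaps X d a b := by
  rintro g ⟨hlen, hg⟩
  refine ⟨hlen, Allowed.of_append_left (v := v) (Allowed.of_append_right hshift (u := u) ?_)⟩
  simpa using hg

theorem IsStronglyIrreducible.gaps_nonempty (hSI : IsStronglyIrreducible X k)
    (hshift : IsShiftInvariant X) {a b : List A} (ha : Allowed X a) (hb : Allowed X b)
    {d : ℕ} (hd : k ≤ d) : (gaps X d a b).Nonempty := by
  obtain ⟨x, hx, hxa⟩ := ha
  obtain ⟨y, hy, hyb⟩ := hb.exists_window_eq hshift (a.length + d)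
  have hfar : ∀ i ∈ Set.Ico (0 : ℤ) a.length,
      ∀ j ∈ Set.Ico ((a.length + d : ℕ) : ℤ) (a.length + d + b.length),
        (k : ℤ) < |i - j| := by
    intro i hi j hj
    simp only [Set.mem_Ico] at hi hj
    rw [abs_sub_comm, abs_of_pos (by omega)]
    omega
  obtain ⟨z, hz, hzx, hzy⟩ := hSI _ _ hfar x hx y hy
  refine ⟨window z a.length d, length_window, z, hz, ?_⟩
  have hza : window z 0 a.length = window x 0 a.length :=
    window_eq_window_iff.2 fun i hi => hzx _ ⟨by omega, by omega⟩
  have hzb : window z (a.length + d) b.length = window y (a.length + d) b.length :=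
    window_eq_window_iff.2 fun i hi => hzy _ ⟨by omega, by omega⟩
  simp only [List.length_append, length_window, window_add, hza, hxa, hzb, hyb, zero_add,
    Nat.cast_add]

structure IsSynchronizing (X : Set (ℤ → A)) (w : List A) : Prop where
  allowed : Allowed X w
  allowed_append_append :
    ∀ u v, Allowed X (u ++ w) → Allowed X (w ++ v) → Allowed X (u ++ w ++ v)

/-- Take allowed `p`, `q` with the fewest gaps of length `k` between them, and such a gap `c`.
Extending `p` to the left or `q` to the right can only lose gaps, so by minimality it loses
none: `c` still fits, which makes `p ++ c ++ q` synchronizing. -/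
theorem IsStronglyIrreducible.exists_isSynchronizing [Finite A]
    (hSI : IsStronglyIrreducible X k) (hne : X.Nonempty) (hshift : IsShiftInvariant X) :
    ∃ w, IsSynchronizing X w := by
  obtain ⟨⟨p, q⟩, ⟨hp, hq⟩, hmin⟩ :=
    (measure fun pq : List A × List A => (gaps X k pq.1 pq.2).ncard).wf.has_min
      {pq | Allowed X pq.1 ∧ Allowed X pq.2} ⟨([], []), allowed_nil hne, allowed_nil hne⟩
  obtain ⟨c, hc⟩ := hSI.gaps_nonempty hshift hp hq le_rfl
  refine ⟨p ++ c ++ q, hc.2, fun u v hu hv => ?_⟩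
  have hup : Allowed X (u ++ p) := Allowed.of_append_left (v := c ++ q) (by simpa using hu)
  have hqv : Allowed X (q ++ v) :=
    Allowed.of_append_right hshift (u := p ++ c) (by simpa using hv)
  have hgaps : gaps X k (u ++ p) (q ++ v) = gaps X k p q :=
    Set.eq_of_subset_of_ncard_le (gaps_append_subset hshift k u p q v)
      (not_lt.1 (hmin (u ++ p, q ++ v) ⟨hup, hqv⟩)) (gaps_finite k p q)
  have hc' : c ∈ gaps X k (u ++ p) (q ++ v) := hgaps ▸ hc
  simpa using hc'.2

theorem mem_of_forall_allowed_window [TopologicalSpace A] (hclosed : IsClosed X)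
    (hshift : IsShiftInvariant X) {x : ℤ → A}
    (h : ∀ n : ℕ, Allowed X (window x (-n) (2 * n))) : x ∈ X := by
  choose y hy hyx using fun n : ℕ => (h n).exists_window_eq hshift (-n)
  simp only [length_window] at hyx
  have hagree : ∀ i : ℤ, ∀ n : ℕ, i.natAbs < n → y n i = x i := by
    intro i n hn
    have := window_eq_window_iff.1 (hyx n) (i + n).toNat (by omega)
    rwa [show -(n : ℤ) + (i + n).toNat = i by omega] at this
  have hlim : Tendsto y atTop (𝓝 x) := tendsto_pi_nhds.2 fun i =>
    tendsto_const_nhds.congr' <|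
      (eventually_gt_atTop i.natAbs).mono fun n hn => (hagree i n hn).symm
  exact hclosed.mem_of_tendsto hlim (Eventually.of_forall hy)

theorem allowed_window_of_periodic (hshift : IsShiftInvariant X) {x : ℤ → A} {N L : ℕ}
    (hN : 0 < N) (hx : Function.Periodic x N) (hw : IsSynchronizing X (window x 0 L))
    (h : Allowed X (window x 0 (N + L))) (a : ℤ) (n : ℕ) : Allowed X (window x a n) := by
  have hrep : ∀ t : ℕ, Allowed X (window x 0 (t * N + L)) := by
    intro t
    induction t with
    | zero => simpa using hw.allowed
    | succ t ih =>
      rw [show (t + 1) * N + L = N + (L + t * N) by ring, window_add_period hx, window_add,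
        ← List.append_assoc]
      rw [add_comm, window_add] at ih
      exact hw.allowed_append_append _ _ (window_add_period hx ▸ h) ih
  obtain ⟨r, hr⟩ : ∃ r : ℕ, (r : ℤ) = a % N :=
    ⟨_, Int.toNat_of_nonneg (Int.emod_nonneg _ (by omega))⟩
  have hshifted : window x a n = window x r n := window_eq_window_iff.2 fun i _ => by
    rw [hr, ← (hx.int_mul (a / N)) (a % N + i)]
    have := Int.emod_add_mul_ediv a N
    push_cast
    congr 1
    linarith
  obtain ⟨m, hm⟩ := Nat.exists_eq_add_of_le (show r + n ≤ (r + n) * N + L by nlinarith)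
  have := hrep (r + n)
  rw [hm, window_add, window_add, zero_add] at this
  exact hshifted ▸ this.of_append_left.of_append_right hshift

theorem IsSynchronizing.exists_periodic_mem [TopologicalSpace A] (hclosed : IsClosed X)
    (hshift : IsShiftInvariant X) {w g : List A} (hw : IsSynchronizing X w)
    (hwgw : Allowed X (w ++ g ++ w)) (hN : 0 < (w ++ g).length) :
    ∃ x ∈ X, Function.Periodic x (w ++ g).length := by
  obtain ⟨y, hyX, hy⟩ := hwgw
  set N := (w ++ g).length
  let x : ℤ → A := fun i => y (i % N)
  have hx : Function.Periodic x N := fun i => by simp [x]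
  have hxN : window x 0 N = w ++ g := by
    rw [List.length_append, window_add] at hy
    rw [← (List.append_inj hy length_window).1]
    exact window_eq_window_iff.2 fun i hi => by
      simp only [x]
      rw [Int.emod_eq_of_lt (by omega) (by omega)]
  have hxL : window x 0 w.length = w := by
    rw [show N = w.length + g.length from List.length_append, window_add] at hxN
    exact (List.append_inj hxN length_window).1
  refine ⟨x, mem_of_forall_allowed_window hclosed hshift fun n => ?_, hx⟩
  refine allowed_window_of_periodic hshift hN hx (hxL ▸ hw) ?_ _ _
  rw [window_add_period hx, hxN, hxL]
  exact ⟨y, hyX, hy⟩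

end Subshift

open Subshift in
theorem SI_subshift_has_periodic_points_general {A : Type*} [Fintype A]
    [TopologicalSpace A]
    (X : Set (ℤ → A)) (hne : X.Nonempty) (hclosed : IsClosed X)
    (hshift : ∀ x ∈ X, ∀ n : ℤ, (fun i => x (i + n)) ∈ X)
    (k : ℕ)
    (hSI : ∀ F F' : Set ℤ, (∀ i ∈ F, ∀ j ∈ F', (k : ℤ) < |i - j|) →
      ∀ x ∈ X, ∀ y ∈ X, ∃ z ∈ X, (∀ i ∈ F, z i = x i) ∧ (∀ j ∈ F', z j = y j)) :
    ∃ N₀ : ℕ, ∀ N : ℕ, N₀ ≤ N → ∃ x ∈ X, ∀ i : ℤ, x (i + N) = x i := by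
  obtain ⟨w, hw⟩ := IsStronglyIrreducible.exists_isSynchronizing hSI hne hshift
  refine ⟨w.length + k + 1, fun N hN => ?_⟩
  obtain ⟨g, hg, hwgw⟩ := IsStronglyIrreducible.gaps_nonempty hSI hshift
    hw.allowed hw.allowed (d := N - w.length) (by omega)
  have hlen : (w ++ g).length = N := by rw [List.length_append, hg]; omega
  obtain ⟨x, hx, hper⟩ := hw.exists_periodic_mem hclosed hshift hwgw (by omega)
  exact ⟨x, hx, hlen ▸ hper⟩

/-- Let `X ⊆ 𝒜^ℤ` be a (nonempty) strongly irreducible subshift over a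
finite alphabet `𝒜` (with strong irreducibility constant `k`). Then there is `N₀` such that
for every `N ≥ N₀`, `X` contains a point of period `N`. -/
theorem SI_subshift_has_periodic_points {A : Type*} [Fintype A]
    [TopologicalSpace A] [DiscreteTopology A]
    (X : Set (ℤ → A)) (hne : X.Nonempty) (hclosed : IsClosed X)
    (hshift : ∀ x ∈ X, ∀ n : ℤ, (fun i => x (i + n)) ∈ X)
    (k : ℕ)
    (hSI : ∀ F F' : Set ℤ, (∀ i ∈ F, ∀ j ∈ F', (k : ℤ) < |i - j|) →
      ∀ x ∈ X, ∀ y ∈ X, ∃ z ∈ X, (∀ i ∈ F, z i = x i) ∧ (∀ j ∈ F', z j = y j)) :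
    ∃ N₀ : ℕ, ∀ N : ℕ, N₀ ≤ N → ∃ x ∈ X, ∀ i : ℤ, x (i + N) = x i :=
  SI_subshift_has_periodic_points_general X hne hclosed hshift k hSI
end

section
/- Let $X \subseteq \mathcal{A}^{\mathbb{Z}^d}$ be a topologically mixing subshift, $G$ a finitely generated group with word metric, and $c : X \times \mathbb{Z}^d \to G$ a continuous cocycle (i.e., $c(x, v+w) = c(x,v) \, c(\sigma^v x, w)$). Suppose there is an infinite subset $C \subseteq \mathbb{Z}^d$ such that $c(x,v)$ has infinite order in $G$ for every $x \in X$ and $v \in C$. Then the set $\{c(x,v) : x \in X, v \in \mathbb{Z}^d\}$ is unbounded in $G$. -/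
open Set

section WordLength

variable {G : Type*} [Group G] {S : Set G}

lemma exists_list_prod_eq_of_closure_eq_top (hsym : ∀ s ∈ S, s⁻¹ ∈ S)
    (hgen : Subgroup.closure S = ⊤) (g : G) :
    ∃ l : List G, (∀ s ∈ l, s ∈ S) ∧ l.prod = g := by
  have hS : S ∪ S⁻¹ = S := union_eq_left.2 fun s hs => inv_inv s ▸ hsym _ hs
  apply Submonoid.exists_list_of_mem_closure
  rw [← hS, ← Subgroup.closure_toSubmonoid, hgen]
  trivial

lemma exists_fin_prod_eq_of_wordLength (hsym : ∀ s ∈ S, s⁻¹ ∈ S)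
    (hgen : Subgroup.closure S = ⊤) (g : G) :
    ∃ f : Fin (wordLength S g) → G, (∀ i, f i ∈ S) ∧ (List.ofFn f).prod = g := by
  obtain ⟨l, hlS, hl⟩ := exists_list_prod_eq_of_closure_eq_top hsym hgen g
  exact Nat.sInf_mem (s := {n | ∃ f : Fin n → G, (∀ i, f i ∈ S) ∧ (List.ofFn f).prod = g})
    ⟨l.length, l.get, fun i => hlS _ (l.get_mem i), by rw [List.ofFn_get, hl]⟩

lemma finite_setOf_wordLength_le_s11 (hfin : S.Finite) (hsym : ∀ s ∈ S, s⁻¹ ∈ S)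
    (hgen : Subgroup.closure S = ⊤) (M : ℕ) : {g : G | wordLength S g ≤ M}.Finite := by
  have hprod : ∀ n, ((fun f : Fin n → G => (List.ofFn f).prod) '' univ.pi fun _ => S).Finite :=
    fun n => (Finite.pi fun _ => hfin).image _
  refine ((finite_le_nat M).biUnion fun n _ => hprod n).subset fun g hg => ?_
  obtain ⟨f, hfS, hf⟩ := exists_fin_prod_eq_of_wordLength hsym hgen g
  exact mem_biUnion hg ⟨f, fun i _ => hfS i, hf⟩

end WordLength

lemma isOfFinOrder_of_forall_pow_mem {G : Type*} [LeftCancelMonoid G] {S : Set G} {g : G}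
    (hS : S.Finite) (hpow : ∀ n : ℕ, g ^ n ∈ S) : IsOfFinOrder g := by
  by_contra hg
  exact infinite_range_of_injective (injective_pow_iff_not_isOfFinOrder.2 hg)
    (hS.subset (range_subset_iff.2 hpow))

lemma Set.Infinite.exists_lt_abs_apply {ι : Type*} [Finite ι] {C : Set (ι → ℤ)}
    (hC : C.Infinite) (n : ℕ) : ∃ v ∈ C, ∃ i, (n : ℤ) < |v i| := by
  by_contra! hsmall
  refine hC ((Finite.pi fun _ => finite_Icc (-(n : ℤ)) n).subset fun v hv => ?_)
  exact mem_univ_pi.2 fun i => abs_le.1 (hsmall v hv i)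

lemma ContinuousWithinAt.exists_finset_eqOn_imp_eq {ι A G : Type*} [TopologicalSpace A]
    [DiscreteTopology A] [TopologicalSpace G] [DiscreteTopology G] {f : (ι → A) → G}
    {X : Set (ι → A)} {x : ι → A} (hf : ContinuousWithinAt f X x) :
    ∃ W : Finset ι, ∀ y ∈ X, EqOn y x W → f y = f x := by
  obtain ⟨U, hUopen, hxU, hU⟩ :=
    mem_nhdsWithin.1 (hf (isOpen_discrete {f x} |>.mem_nhds rfl))
  obtain ⟨W, V, hV, hWV⟩ := isOpen_pi_iff.1 hUopen x hxU
  refine ⟨W, fun y hy hyx => hU ⟨hWV fun i hi => ?_, hy⟩⟩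
  rw [hyx hi]
  exact (hV i hi).2

section AsymptoticValues

variable {M A G : Type*} {X : Set (M → A)} {c : (M → A) → M → G}

def asymptoticValues [Add M] (X : Set (M → A)) (c : (M → A) → M → G) (x : M → A) : Set G :=
  {t | ∀ D : Finset M, ∃ y ∈ X, ∃ v, EqOn (fun s => y (s + v)) x D ∧ c y v = t}

lemma one_mem_asymptoticValues [AddZeroClass M] [Group G]
    (hcoc : ∀ x ∈ X, ∀ v w : M, c x (v + w) = c x v * c (fun u => x (u + v)) w)
    {x : M → A} (hx : x ∈ X) : 1 ∈ asymptoticValues X c x := by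
  have hc0 : c x 0 = 1 := by simpa using hcoc x hx 0 0
  exact fun D => ⟨x, hx, 0, fun s _ => by simp, hc0⟩

lemma asymptoticValues_subset [Add M] {B : Set G} (hB : ∀ y ∈ X, ∀ v, c y v ∈ B) (x : M → A) :
    asymptoticValues X c x ⊆ B := fun t ht => by
  obtain ⟨y, hy, v, -, rfl⟩ := ht ∅
  exact hB y hy v

lemma exists_finset_notMem_asymptoticValues [Add M] {x : M → A} {t : G}
    (ht : t ∉ asymptoticValues X c x) :
    ∃ D : Finset M, ∀ z, EqOn z x D → t ∉ asymptoticValues X c z := by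
  by_contra! hnear
  refine ht fun D => ?_
  obtain ⟨z, hzx, htz⟩ := hnear D
  obtain ⟨y, hy, v, hyz, hyv⟩ := htz D
  exact ⟨y, hy, v, hyz.trans hzx, hyv⟩

lemma exists_finset_asymptoticValues_subset [Add M] {B : Set G} (hBfin : B.Finite)
    (hB : ∀ y ∈ X, ∀ v, c y v ∈ B) (x : M → A) :
    ∃ D : Finset M, ∀ z ∈ X, EqOn z x D → asymptoticValues X c z ⊆ asymptoticValues X c x := by
  classical
  choose! E hE using fun t (ht : t ∈ B \ asymptoticValues X c x) =>
    exists_finset_notMem_asymptoticValues ht.2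
  have hT : (B \ asymptoticValues X c x).Finite := hBfin.subset sdiff_subset
  refine ⟨hT.toFinset.biUnion E, fun z hz hzx t htz => ?_⟩
  by_contra htx
  have ht : t ∈ B \ asymptoticValues X c x := ⟨asymptoticValues_subset hB z htz, htx⟩
  refine hE t ht z (hzx.mono ?_) htz
  exact Finset.coe_subset.2 (Finset.subset_biUnion_of_mem E (hT.mem_toFinset.2 ht))

variable [TopologicalSpace A] [DiscreteTopology A] [Group G] [TopologicalSpace G]
  [DiscreteTopology G]

lemma mul_mem_asymptoticValues_shift [AddCommSemigroup M]
    (hshift : ∀ x ∈ X, ∀ v : M, (fun u => x (u + v)) ∈ X)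
    (hcoc : ∀ x ∈ X, ∀ v w : M, c x (v + w) = c x v * c (fun u => x (u + v)) w)
    {x : M → A} {u : M} (hcont : ContinuousWithinAt (fun y => c y u) X x) {t : G}
    (ht : t ∈ asymptoticValues X c x) :
    t * c x u ∈ asymptoticValues X c (fun s => x (s + u)) := by
  classical
  intro D
  obtain ⟨W, hW⟩ := hcont.exists_finset_eqOn_imp_eq
  obtain ⟨y, hy, v, hyx, rfl⟩ := ht (D.image (· + u) ∪ W)
  refine ⟨y, hy, v + u, fun s hs => ?_, ?_⟩
  · change y (s + (v + u)) = x (s + u)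
    rw [show s + (v + u) = s + u + v by ac_rfl]
    exact hyx (Finset.mem_union_left _ (Finset.mem_image_of_mem _ hs))
  · rw [hcoc y hy v u, hW _ (hshift y hy v) (hyx.mono (by simp))]

lemma pow_mem_asymptoticValues [AddCommMonoid M]
    (hshift : ∀ x ∈ X, ∀ v : M, (fun u => x (u + v)) ∈ X)
    (hcoc : ∀ x ∈ X, ∀ v w : M, c x (v + w) = c x v * c (fun u => x (u + v)) w)
    {x : M → A} (hx : x ∈ X) {v : M} (hcont : ContinuousWithinAt (fun y => c y v) X x)
    (hsub : asymptoticValues X c (fun s => x (s + v)) ⊆ asymptoticValues X c x) :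
    ∀ k : ℕ, c x v ^ k ∈ asymptoticValues X c x
  | 0 => by simpa using one_mem_asymptoticValues hcoc hx
  | k + 1 => by
    rw [pow_succ]
    exact hsub (mul_mem_asymptoticValues_shift hshift hcoc hcont
      (pow_mem_asymptoticValues hshift hcoc hx hcont hsub k))

end AsymptoticValues

theorem mixing_cocycle_unbounded_general {A : Type*}
    [TopologicalSpace A] [DiscreteTopology A] (d : ℕ)
    {G : Type*} [Group G] [TopologicalSpace G] [DiscreteTopology G]
    (S₀ : Set G) (hS₀fin : S₀.Finite) (hS₀sym : ∀ s ∈ S₀, s⁻¹ ∈ S₀)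
    (hS₀gen : Subgroup.closure S₀ = ⊤)
    (X : Set ((Fin d → ℤ) → A)) (hne : X.Nonempty)
    (hshift : ∀ x ∈ X, ∀ v : Fin d → ℤ, (fun u => x (u + v)) ∈ X)
    (hmix : ∀ x ∈ X, ∀ y ∈ X, ∀ F : Finset (Fin d → ℤ), ∃ n : ℕ,
      ∀ v : Fin d → ℤ, (∃ i, (n : ℤ) < |v i|) →
        ∃ z ∈ X, (∀ u ∈ F, z u = y u) ∧ ∀ u ∈ F, z (u + v) = x u)
    (c : ((Fin d → ℤ) → A) → (Fin d → ℤ) → G)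
    (hcont : ∀ v : Fin d → ℤ, ContinuousOn (fun x => c x v) X)
    (hcoc : ∀ x ∈ X, ∀ v w : Fin d → ℤ,
      c x (v + w) = c x v * c (fun u => x (u + v)) w)
    (C : Set (Fin d → ℤ)) (hCinf : C.Infinite)
    (hord : ∀ x ∈ X, ∀ v ∈ C, ¬ IsOfFinOrder (c x v)) :
    ∀ M : ℕ, ∃ x ∈ X, ∃ v : Fin d → ℤ, M < wordLength S₀ (c x v) := by
  intro M
  by_contra! hbdd
  have hB := finite_setOf_wordLength_le_s11 hS₀fin hS₀sym hS₀gen M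
  obtain ⟨y₀, hy₀, hmin⟩ :=
    exists_minimalFor_of_wellFoundedLT (· ∈ X) (fun x => (asymptoticValues X c x).ncard) hne
  have hfin : (asymptoticValues X c y₀).Finite := hB.subset (asymptoticValues_subset hbdd y₀)
  obtain ⟨D, hD⟩ := exists_finset_asymptoticValues_subset hB hbdd y₀
  have hrigid : ∀ z ∈ X, EqOn z y₀ D → asymptoticValues X c z = asymptoticValues X c y₀ :=
    fun z hz hzy => eq_of_subset_of_ncard_le (hD z hz hzy)
      (hmin hz (ncard_le_ncard (hD z hz hzy) hfin)) hfin
  obtain ⟨n, hn⟩ := hmix y₀ hy₀ y₀ hy₀ D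
  obtain ⟨v, hvC, hv⟩ := hCinf.exists_lt_abs_apply n
  obtain ⟨z, hz, hzy, hzvy⟩ := hn v hv
  have hz₀ := hrigid z hz hzy
  have hzv₀ := hrigid _ (hshift z hz v) hzvy
  have hpow := pow_mem_asymptoticValues hshift hcoc hz (hcont v z hz) (hzv₀.trans hz₀.symm).le
  exact hord z hz v hvC (isOfFinOrder_of_forall_pow_mem (hz₀ ▸ hfin) hpow)

/-- Let `X ⊆ 𝒜^{ℤ^d}` be a (nonempty) topologically mixing subshift, `G` a
finitely generated group with word metric, and `c : X × ℤ^d → G` a continuous cocycle.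
If there is an infinite set `C ⊆ ℤ^d` such that `c x v` has infinite order for every
`x ∈ X` and `v ∈ C`, then `{c x v : x ∈ X, v ∈ ℤ^d}` is unbounded in `G`. -/
theorem mixing_cocycle_unbounded {A : Type*} [Fintype A]
    [TopologicalSpace A] [DiscreteTopology A] (d : ℕ)
    {G : Type*} [Group G] [TopologicalSpace G] [DiscreteTopology G]
    (S₀ : Set G) (hS₀fin : S₀.Finite) (hS₀sym : ∀ s ∈ S₀, s⁻¹ ∈ S₀)
    (hS₀gen : Subgroup.closure S₀ = ⊤)
    (X : Set ((Fin d → ℤ) → A)) (hne : X.Nonempty) (hclosed : IsClosed X)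
    (hshift : ∀ x ∈ X, ∀ v : Fin d → ℤ, (fun u => x (u + v)) ∈ X)
    (hmix : ∀ x ∈ X, ∀ y ∈ X, ∀ F : Finset (Fin d → ℤ), ∃ n : ℕ,
      ∀ v : Fin d → ℤ, (∃ i, (n : ℤ) < |v i|) →
        ∃ z ∈ X, (∀ u ∈ F, z u = y u) ∧ ∀ u ∈ F, z (u + v) = x u)
    (c : ((Fin d → ℤ) → A) → (Fin d → ℤ) → G)
    (hcont : ∀ v : Fin d → ℤ, ContinuousOn (fun x => c x v) X)
    (hcoc : ∀ x ∈ X, ∀ v w : Fin d → ℤ,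
      c x (v + w) = c x v * c (fun u => x (u + v)) w)
    (C : Set (Fin d → ℤ)) (hCinf : C.Infinite)
    (hord : ∀ x ∈ X, ∀ v ∈ C, ¬ IsOfFinOrder (c x v)) :
    ∀ M : ℕ, ∃ x ∈ X, ∃ v : Fin d → ℤ, M < wordLength S₀ (c x v) :=
  mixing_cocycle_unbounded_general d S₀ hS₀fin hS₀sym hS₀gen X hne hshift hmix c hcont hcoc C hCinf
    hord
end

section
/- Let $d \geq 1$ and let $\mathcal{B} = \{B_1, \ldots, B_d\}$ be an orthogonal collection of $d$-dimensional bars with $n_i(B_i) = b_i \neq 1$ for each $i$. If the box $R$ determined by sidelengths $(\ell_1, \ldots, \ell_d)$ can be tiled by translates of bars from $\mathcal{B}$, then there exists $i \in [d]$ such that $b_i$ divides $\ell_i$, and consequently the single bar $B_i$ tiles $R$. -/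
/-- The translate by `s` of the box with sidelength vector `n`, as a set of points
of `ℕ^d`. -/
def translBox {d : ℕ} (n : Fin d → ℕ) (s : Fin d → ℕ) : Set (Fin d → ℕ) :=
  {p | ∀ j, s j ≤ p j ∧ p j < s j + n j}

/-- The box of sidelengths `ℓ` based at the origin. -/
def boxSet {d : ℕ} (ℓ : Fin d → ℕ) : Set (Fin d → ℕ) :=
  {p | ∀ j, p j < ℓ j}

/-- Sidelength vector of the bar `Bᵢ`: sidelength `b i` in coordinate `i` and `1`
elsewhere. -/
def barSides {d : ℕ} (b : Fin d → ℕ) (i : Fin d) : Fin d → ℕ :=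
  fun j => if j = i then b i else 1

/-- The box `boxSet ℓ` is tiled by translates of the bars `Bᵢ` for `i ∈ I`: there is a
set `T` of (bar index, translation) pairs, with indices in `I`, each translated bar
contained in the box, and each point of the box covered by exactly one translated bar. -/
def TiledByBars {d : ℕ} (b : Fin d → ℕ) (ℓ : Fin d → ℕ) (I : Set (Fin d)) : Prop :=
  ∃ T : Set (Fin d × (Fin d → ℕ)),
    (∀ t ∈ T, t.1 ∈ I ∧ translBox (barSides b t.1) t.2 ⊆ boxSet ℓ) ∧
    ∀ p ∈ boxSet ℓ, ∃! t : Fin d × (Fin d → ℕ),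
      t ∈ T ∧ p ∈ translBox (barSides b t.1) t.2
/-!
Put the integer weight `w_b(k) = b·[b ∣ k] - 1` on `ℕ` (an integer stand-in for evaluating at a
`b`-th root of unity) and `W(p) = ∏ⱼ w_{bⱼ}(pⱼ)` on `ℕ^d`. Since `w_b` sums to zero over any `b`
consecutive integers, `W` sums to zero over every translate of the bar `Bᵢ`. A tiling therefore
forces the sum of `W` over the box, which factors as `∏ⱼ ∑_{k < ℓⱼ} w_{bⱼ}(k)`, to vanish, so
some factor vanishes; but `∑_{k < ℓ} w_b(k) = b·#{k < ℓ | b ∣ k} - ℓ`, which is zero only if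
`b ∣ ℓ`. Conversely, if `bᵢ ∣ ℓᵢ` the box is cut into translates of `Bᵢ` along coordinate `i`.
-/

open Finset Fintype

def dvdWeight (b k : ℕ) : ℤ := if b ∣ k then (b : ℤ) - 1 else -1

lemma sum_dvdWeight (b : ℕ) (S : Finset ℕ) :
    ∑ k ∈ S, dvdWeight b k = b * #{k ∈ S | b ∣ k} - #S := by
  have h : ∀ k, dvdWeight b k = b * (if b ∣ k then 1 else 0) - 1 := by
    intro k; unfold dvdWeight; split_ifs <;> ring
  simp only [h, sum_sub_distrib, ← mul_sum, sum_boole, sum_const, nsmul_eq_mul, mul_one]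

lemma sum_Ico_dvdWeight (b s : ℕ) : ∑ k ∈ Ico s (s + b), dvdWeight b k = 0 := by
  rw [sum_dvdWeight, Nat.filter_Ico_card_eq_of_periodic _ _ _ fun k => by simp, Nat.card_Ico,
    Nat.add_sub_cancel_left]
  rcases b.eq_zero_or_pos with rfl | hb
  · simp
  · have : {k ∈ range b | b ∣ k} = {0} := by
      ext k
      simp only [mem_filter, mem_range, mem_singleton]
      exact ⟨fun ⟨hk, hdvd⟩ => Nat.eq_zero_of_dvd_of_lt hdvd hk, fun hk => hk ▸ ⟨hb, dvd_zero b⟩⟩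
    simp [Nat.count_eq_card_filter_range, this]

lemma dvd_of_sum_range_dvdWeight_eq_zero {b ℓ : ℕ}
    (h : ∑ k ∈ range ℓ, dvdWeight b k = 0) : b ∣ ℓ := by
  rw [sum_dvdWeight, card_range, sub_eq_zero] at h
  exact ⟨_, by exact_mod_cast h.symm⟩

theorem Finset.sum_eq_zero_of_existsUnique_tile {α ι M : Type*} [AddCommMonoid M]
    {A : Finset α} {T : Set ι} {F : ι → Finset α} (hsub : ∀ t ∈ T, F t ⊆ A)
    (hcover : ∀ p ∈ A, ∃! t, t ∈ T ∧ p ∈ F t) {f : α → M}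
    (hf : ∀ t ∈ T, ∑ p ∈ F t, f p = 0) : ∑ p ∈ A, f p = 0 := by
  classical
  let tilesAt : α → Set ι := fun p => {t | t ∈ T ∧ p ∈ F t}
  have tilesAt_eq : ∀ p ∈ A, ∃ t ∈ T, tilesAt p = {t} ∧ p ∈ F t := by
    intro p hp
    obtain ⟨t, ht, huniq⟩ := hcover p hp
    exact ⟨t, ht.1, Set.eq_singleton_iff_unique_mem.2 ⟨ht, fun t' ht' => huniq t' ht'⟩, ht.2⟩
  rw [← sum_fiberwise_of_maps_to fun p hp => mem_image_of_mem tilesAt hp]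
  refine sum_eq_zero fun y hy => ?_
  obtain ⟨p, hp, rfl⟩ := mem_image.1 hy
  obtain ⟨t, ht, hpt, -⟩ := tilesAt_eq p hp
  have hfiber : {q ∈ A | tilesAt q = tilesAt p} = F t := by
    ext q
    simp only [mem_filter, hpt]
    constructor
    · intro hq
      exact (hq.2.symm ▸ Set.mem_singleton t : t ∈ tilesAt q).2
    · intro hq
      obtain ⟨t', -, hqt', -⟩ := tilesAt_eq q (hsub t ht hq)
      have htq : t ∈ tilesAt q := ⟨ht, hq⟩
      rw [hqt', Set.mem_singleton_iff] at htq
      exact ⟨hsub t ht hq, htq ▸ hqt'⟩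
  rw [hfiber]
  exact hf t ht

lemma coe_piFinset_Ico {d : ℕ} (n s : Fin d → ℕ) :
    (piFinset fun j => Ico (s j) (s j + n j) : Set (Fin d → ℕ)) = translBox n s := by
  ext p
  simp [translBox]

lemma coe_piFinset_range {d : ℕ} (ℓ : Fin d → ℕ) :
    (piFinset fun j => range (ℓ j) : Set (Fin d → ℕ)) = boxSet ℓ := by
  ext p
  simp [boxSet]

lemma sum_piFinset_barSides_prod_dvdWeight {d : ℕ} (b : Fin d → ℕ) (i : Fin d) (s : Fin d → ℕ) :
    ∑ p ∈ piFinset (fun j => Ico (s j) (s j + barSides b i j)), ∏ j, dvdWeight (b j) (p j) = 0 := by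
  rw [← prod_univ_sum]
  exact prod_eq_zero (mem_univ i) (by simpa [barSides] using sum_Ico_dvdWeight (b i) (s i))

theorem TiledByBars.exists_dvd {d : ℕ} {b ℓ : Fin d → ℕ} {I : Set (Fin d)}
    (h : TiledByBars b ℓ I) : ∃ i, b i ∣ ℓ i := by
  obtain ⟨T, hT, hcover⟩ := h
  simp only [← coe_piFinset_Ico, ← coe_piFinset_range, mem_coe, coe_subset] at hT hcover
  have hsum : ∑ p ∈ piFinset (fun j => range (ℓ j)), ∏ j, dvdWeight (b j) (p j) = 0 :=
    sum_eq_zero_of_existsUnique_tile (fun t ht => (hT t ht).2) hcover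
      fun t _ => sum_piFinset_barSides_prod_dvdWeight b t.1 t.2
  rw [← prod_univ_sum] at hsum
  obtain ⟨i, -, hi⟩ := prod_eq_zero_iff.1 hsum
  exact ⟨i, dvd_of_sum_range_dvdWeight_eq_zero hi⟩

lemma mem_translBox_barSides {d : ℕ} {b : Fin d → ℕ} {i : Fin d} {s p : Fin d → ℕ} :
    p ∈ translBox (barSides b i) s ↔ (s i ≤ p i ∧ p i < s i + b i) ∧ ∀ j ≠ i, p j = s j := by
  simp only [translBox, barSides, Set.mem_ofPred_eq]
  refine ⟨fun h => ⟨by simpa using h i, fun j hj => ?_⟩, fun h j => ?_⟩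
  · have hpj := h j
    simp only [hj, if_false] at hpj
    omega
  · by_cases hj : j = i
    · subst hj
      simpa using h.1
    · simp only [hj, if_false]
      have hpj := h.2 j hj
      omega

lemma Nat.add_le_of_dvd_of_lt {b s ℓ : ℕ} (hs : b ∣ s) (hℓ : b ∣ ℓ) (h : s < ℓ) : s + b ≤ ℓ := by
  have hb := Nat.le_of_dvd (Nat.sub_pos_of_lt h) (Nat.dvd_sub hℓ hs)
  omega

lemma Nat.eq_mul_div_of_dvd_of_le_of_lt {b s p : ℕ} (hs : b ∣ s) (hle : s ≤ p) (hlt : p < s + b) :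
    s = b * (p / b) := by
  obtain ⟨q, rfl⟩ := hs
  rw [Nat.div_eq_of_lt_le (by rwa [mul_comm]) (by rw [Nat.succ_mul, mul_comm]; exact hlt)]

theorem tiledByBars_singleton_of_dvd {d : ℕ} {b ℓ : Fin d → ℕ} {i : Fin d} (hdvd : b i ∣ ℓ i) :
    TiledByBars b ℓ {i} := by
  refine ⟨(i, ·) '' {s | s ∈ boxSet ℓ ∧ b i ∣ s i}, ?_, fun p hp => ?_⟩
  · rintro _ ⟨s, ⟨hs, hsi⟩, rfl⟩
    refine ⟨rfl, fun p hp j => ?_⟩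
    rw [mem_translBox_barSides] at hp
    by_cases hj : j = i
    · subst hj
      exact hp.1.2.trans_le (Nat.add_le_of_dvd_of_lt hsi hdvd (hs j))
    · exact hp.2 j hj ▸ hs j
  have hb : 0 < b i := Nat.pos_of_dvd_of_pos hdvd ((Nat.zero_le _).trans_lt (hp i))
  refine ⟨(i, Function.update p i (b i * (p i / b i))), ⟨⟨_, ⟨?_, ?_⟩, rfl⟩, ?_⟩, ?_⟩
  · intro j
    rcases eq_or_ne j i with rfl | hj
    · simpa using (Nat.mul_div_le (p j) (b j)).trans_lt (hp j)
    · simpa [hj] using hp j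
  · simp
  · rw [mem_translBox_barSides]
    have hdiv := Nat.div_add_mod (p i) (b i)
    have hmod := Nat.mod_lt (p i) hb
    refine ⟨by simp only [Function.update_self]; omega, fun j hj => by simp [hj]⟩
  · rintro _ ⟨⟨s, ⟨-, hsi⟩, rfl⟩, hps⟩
    rw [mem_translBox_barSides] at hps
    refine Prod.ext rfl (funext fun j => ?_)
    rcases eq_or_ne j i with rfl | hj
    · simpa using Nat.eq_mul_div_of_dvd_of_le_of_lt hsi hps.1.1 hps.1.2
    · simpa [hj] using (hps.2 j hj).symm

theorem orthogonal_bars_tiling_general (d : ℕ) (b : Fin d → ℕ)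
    (ℓ : Fin d → ℕ)
    (htiled : TiledByBars b ℓ Set.univ) :
    ∃ i : Fin d, b i ∣ ℓ i ∧ TiledByBars b ℓ {i} := by
  obtain ⟨i, hi⟩ := htiled.exists_dvd
  exact ⟨i, hi, tiledByBars_singleton_of_dvd hi⟩

/-- Let `𝓑 = {B₁, …, B_d}` be an orthogonal collection of `d`-dimensional
bars, with `nᵢ(Bᵢ) = bᵢ ≠ 1`. If the box with sidelengths `(ℓ₁, …, ℓ_d)` is tiled by
translates of bars from `𝓑`, then there is an `i` with `bᵢ ∣ ℓᵢ`, and consequently the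
single bar `Bᵢ` tiles the box. -/
theorem orthogonal_bars_tiling (d : ℕ) (hd : 0 < d) (b : Fin d → ℕ)
    (hbpos : ∀ i, 0 < b i) (hb : ∀ i, b i ≠ 1)
    (ℓ : Fin d → ℕ)
    (htiled : TiledByBars b ℓ Set.univ) :
    ∃ i : Fin d, b i ∣ ℓ i ∧ TiledByBars b ℓ {i} :=
  orthogonal_bars_tiling_general d b ℓ htiled
end

section
/- Let $d \geq 1$ and let $\mathcal{R}$ be a finite collection of $d$-dimensional integer boxes. Suppose that for every partition $\mathcal{R} = A_1 \sqcup \cdots \sqcup A_d$ (with some parts possibly empty), there exists $1 \leq j \leq d$ with $\gcd(n_j(R) : R \in A_j) = 1$. Then there exists $k_0 \in \mathbb{N}$ such that every box $R_\ell$ with all sidelengths $\ell_1, \ldots, \ell_d \geq k_0$ can be tiled by translates of boxes from $\mathcal{R}$. -/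
/-- The box `boxSet ℓ` is tiled by translates of the boxes `R i`, `i : Fin k`: there is a
set `T` of (box index, translation) pairs with each translated box contained in `boxSet ℓ`
and every point of `boxSet ℓ` covered by exactly one translated box. -/
def TiledByBoxes {d k : ℕ} (R : Fin k → Fin d → ℕ) (ℓ : Fin d → ℕ) : Prop :=
  ∃ T : Set (Fin k × (Fin d → ℕ)),
    (∀ t ∈ T, translBox (R t.1) t.2 ⊆ boxSet ℓ) ∧
    ∀ p ∈ boxSet ℓ, ∃! t : Fin k × (Fin d → ℕ),
      t ∈ T ∧ p ∈ translBox (R t.1) t.2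

/-!
Induct on the set `J` of directions in which the box is only required to be long, requiring in
every other direction `j` a multiple of the lcm of the `j`-th sides of the boxes in use. To drop a
direction `j₀` from `J`, fix a prime `p`: either the boxes whose `j₀`-th side is prime to `p` still
satisfy the gcd hypothesis for `J \ {j₀}`, or the hypothesis for `J` (put those boxes into their bad
parts and the others into part `j₀`) makes the `j₀`-th sides of the others, all multiples of `p`,
coprime. Hence the lcms of the `j₀`-th sides of the subfamilies satisfying the hypothesis for
`J \ {j₀}` have gcd `1`, every large length is a sum of them, and boxes of those lengths in
direction `j₀`, tiled by induction, stack into the required box.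
-/

open Filter Function Set

section Tiling

variable {d k : ℕ}

def IsBoxTiling (R : Fin k → Fin d → ℕ) (T : Set (Fin k × (Fin d → ℕ)))
    (X : Set (Fin d → ℕ)) : Prop :=
  (∀ t ∈ T, translBox (R t.1) t.2 ⊆ X) ∧
    ∀ p ∈ X, ∃! t : Fin k × (Fin d → ℕ), t ∈ T ∧ p ∈ translBox (R t.1) t.2

variable {R : Fin k → Fin d → ℕ}

lemma tiledByBoxes_iff {ℓ : Fin d → ℕ} :
    TiledByBoxes R ℓ ↔ ∃ T, IsBoxTiling R T (boxSet ℓ) := Iff.rfl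

lemma IsBoxTiling.union {T₁ T₂ : Set (Fin k × (Fin d → ℕ))} {X₁ X₂ : Set (Fin d → ℕ)}
    (h₁ : IsBoxTiling R T₁ X₁) (h₂ : IsBoxTiling R T₂ X₂) (hX : Disjoint X₁ X₂) :
    IsBoxTiling R (T₁ ∪ T₂) (X₁ ∪ X₂) := by
  have cover : ∀ {T₁ T₂ : Set (Fin k × (Fin d → ℕ))} {X₁ X₂ : Set (Fin d → ℕ)},
      IsBoxTiling R T₁ X₁ → IsBoxTiling R T₂ X₂ → Disjoint X₁ X₂ →
      ∀ p ∈ X₁, ∃! t : Fin k × (Fin d → ℕ), t ∈ T₁ ∪ T₂ ∧ p ∈ translBox (R t.1) t.2 := by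
    intro T₁ T₂ X₁ X₂ h₁ h₂ hX p hp
    obtain ⟨t, ht, huniq⟩ := h₁.2 p hp
    refine ⟨t, ⟨Or.inl ht.1, ht.2⟩, ?_⟩
    rintro t' ⟨ht' | ht', hpt'⟩
    · exact huniq t' ⟨ht', hpt'⟩
    · exact absurd (h₂.1 t' ht' hpt') (hX.notMem_of_mem_left hp)
  refine ⟨?_, ?_⟩
  · rintro t (ht | ht)
    exacts [(h₁.1 t ht).trans subset_union_left, (h₂.1 t ht).trans subset_union_right]
  · rintro p (hp | hp)
    · exact cover h₁ h₂ hX p hp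
    · simpa only [union_comm T₁] using cover h₂ h₁ hX.symm p hp

lemma translBox_add (n s v : Fin d → ℕ) : translBox n (s + v) = (· + v) '' translBox n s := by
  ext p
  constructor
  · intro hp
    have hv : v ≤ p := fun j => by
      have := hp j
      simp only [Pi.add_apply] at this
      show v j ≤ p j
      omega
    refine ⟨p - v, fun j => ?_, tsub_add_cancel_of_le hv⟩
    have := hp j
    simp only [Pi.add_apply, Pi.sub_apply] at this ⊢
    omega
  · rintro ⟨q, hq, rfl⟩ j
    have := hq j
    simp only [Pi.add_apply]
    omega

lemma IsBoxTiling.image_add {T : Set (Fin k × (Fin d → ℕ))} {X : Set (Fin d → ℕ)}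
    (h : IsBoxTiling R T X) (v : Fin d → ℕ) :
    IsBoxTiling R ((fun t => (t.1, t.2 + v)) '' T) ((· + v) '' X) := by
  refine ⟨?_, ?_⟩
  · rintro _ ⟨t, ht, rfl⟩
    rw [translBox_add]
    exact image_mono (h.1 t ht)
  · rintro _ ⟨q, hq, rfl⟩
    obtain ⟨t, ⟨ht, hqt⟩, huniq⟩ := h.2 q hq
    refine ⟨(t.1, t.2 + v), ⟨mem_image_of_mem _ ht, ?_⟩, ?_⟩
    · rw [translBox_add]
      exact mem_image_of_mem _ hqt
    · rintro _ ⟨⟨t', ht', rfl⟩, hpt'⟩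
      rw [translBox_add] at hpt'
      obtain ⟨q', hq', hq'q⟩ := hpt'
      rw [add_left_injective v hq'q] at hq'
      rw [huniq t' ⟨ht', hq'⟩]

lemma boxSet_eq_translBox_zero (ℓ : Fin d → ℕ) : boxSet ℓ = translBox ℓ 0 := by
  ext p
  simp [boxSet, translBox]

lemma boxSet_update_add (ℓ : Fin d → ℕ) (j : Fin d) (a b : ℕ) :
    boxSet (update ℓ j (a + b)) =
      boxSet (update ℓ j a) ∪ translBox (update ℓ j b) (Pi.single j a) := by
  ext p
  simp only [boxSet, translBox, mem_union, mem_ofPred_eq]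
  constructor
  · intro hp
    by_cases hpj : p j < a
    · refine Or.inl fun i => ?_
      rcases eq_or_ne i j with rfl | hi
      · simpa using hpj
      · simpa [hi] using hp i
    · refine Or.inr fun i => ?_
      have := hp i
      rcases eq_or_ne i j with rfl | hi
      · simp only [update_self, Pi.single_eq_same] at this ⊢
        omega
      · simpa [hi] using this
  · rintro (hp | hp) i <;> have := hp i <;> rcases eq_or_ne i j with rfl | hi
    · simp only [update_self] at this ⊢
      omega
    · simpa [hi] using this
    · simp only [update_self, Pi.single_eq_same] at this ⊢
      omega
    · simpa [hi] using this

lemma disjoint_boxSet_update_translBox (ℓ n : Fin d → ℕ) (j : Fin d) (a : ℕ) :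
    Disjoint (boxSet (update ℓ j a)) (translBox n (Pi.single j a)) :=
  disjoint_left.2 fun p hp hp' => by
    have h₁ := hp j
    have h₂ := (hp' j).1
    simp only [update_self, Pi.single_eq_same] at h₁ h₂
    omega

lemma TiledByBoxes.update_add {ℓ : Fin d → ℕ} {j : Fin d} {a b : ℕ}
    (ha : TiledByBoxes R (update ℓ j a)) (hb : TiledByBoxes R (update ℓ j b)) :
    TiledByBoxes R (update ℓ j (a + b)) := by
  rw [tiledByBoxes_iff] at ha hb ⊢
  obtain ⟨T₁, h₁⟩ := ha
  obtain ⟨T₂, h₂⟩ := hb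
  have h₂' := h₂.image_add (Pi.single j a)
  rw [boxSet_eq_translBox_zero, ← translBox_add, zero_add] at h₂'
  rw [boxSet_update_add]
  exact ⟨_, h₁.union h₂' (disjoint_boxSet_update_translBox ..)⟩

lemma TiledByBoxes.of_eq_zero {ℓ : Fin d → ℕ} {j : Fin d} (h : ℓ j = 0) : TiledByBoxes R ℓ :=
  ⟨∅, by simp, fun p hp => absurd (hp j) (by simp [h])⟩

variable (R) in
def tiledLengths (ℓ : Fin d → ℕ) (j : Fin d) : AddSubmonoid ℕ where
  carrier := {m | TiledByBoxes R (update ℓ j m)}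
  add_mem' := TiledByBoxes.update_add
  zero_mem' := TiledByBoxes.of_eq_zero (update_self j 0 ℓ)

lemma TiledByBoxes.self (i : Fin k) : TiledByBoxes R (R i) := by
  refine ⟨{(i, 0)}, ?_, fun p hp => ⟨(i, 0), ⟨rfl, ?_⟩, ?_⟩⟩
  · rintro t rfl
    rw [boxSet_eq_translBox_zero]
  · rwa [boxSet_eq_translBox_zero] at hp
  · rintro t ⟨rfl, -⟩
    rfl

lemma TiledByBoxes.update_mul {ℓ : Fin d → ℕ} (h : TiledByBoxes R ℓ) (j : Fin d) (c : ℕ) :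
    TiledByBoxes R (update ℓ j (c * ℓ j)) := by
  have : ℓ j ∈ tiledLengths R ℓ j := by simpa [tiledLengths] using h
  simpa [tiledLengths] using nsmul_mem this c

lemma TiledByBoxes.of_dvd {ℓ : Fin d → ℕ} (i : Fin k) (h : ∀ j, R i j ∣ ℓ j) :
    TiledByBoxes R ℓ := by
  classical
  suffices ∀ J : Finset (Fin d), TiledByBoxes R fun j => if j ∈ J then ℓ j else R i j by
    simpa using this Finset.univ
  intro J
  induction J using Finset.induction_on with
  | empty => simpa using TiledByBoxes.self i
  | insert j J hj ih =>
    obtain ⟨c, hc⟩ := h j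
    convert ih.update_mul j c using 1
    ext j'
    rcases eq_or_ne j' j with rfl | hne
    · simp [hj, hc, mul_comm]
    · simp [hne]

end Tiling

section CoprimePart

variable {d k : ℕ}

def HasCoprimePart (R : Fin k → Fin d → ℕ) (S : Finset (Fin k)) (J : Finset (Fin d)) : Prop :=
  ∀ P : Fin k → Fin d, (∀ i ∈ S, P i ∈ J) → ∃ j ∈ J, {i ∈ S | P i = j}.gcd (R · j) = 1

variable {R : Fin k → Fin d → ℕ} {S : Finset (Fin k)}

lemma HasCoprimePart.exists_dvd_lcm (h : HasCoprimePart R S ∅) :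
    ∃ i, ∀ j, R i j ∣ S.lcm (R · j) := by
  by_contra! hR
  choose P hP using hR
  obtain ⟨j, hj, -⟩ := h P fun i hi => absurd (Finset.dvd_lcm hi) (hP i)
  simp at hj

lemma HasCoprimePart.or_gcd_sdiff_eq_one {J : Finset (Fin d)} {j₀ : Fin d} (hj₀ : j₀ ∉ J)
    (h : HasCoprimePart R S (insert j₀ J)) {S' : Finset (Fin k)} (hS' : S' ⊆ S) :
    HasCoprimePart R S' J ∨ (S \ S').gcd (R · j₀) = 1 := by
  classical
  refine or_iff_not_imp_left.2 fun hS'J => ?_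
  obtain ⟨P', hP'J, hP'⟩ : ∃ P' : Fin k → Fin d, (∀ i ∈ S', P' i ∈ J) ∧
      ∀ j ∈ J, {i ∈ S' | P' i = j}.gcd (R · j) ≠ 1 := by
    simpa [HasCoprimePart] using hS'J
  have hne : ∀ i ∈ S', P' i ≠ j₀ := fun i hi h => hj₀ (h ▸ hP'J i hi)
  obtain ⟨j, hj, hgcd⟩ := h (fun i => if i ∈ S' then P' i else j₀) fun i _ => by
    by_cases hi : i ∈ S' <;> simp [hi, hP'J]
  rcases Finset.mem_insert.1 hj with rfl | hjJ
  · convert hgcd using 2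
    ext i
    by_cases hi : i ∈ S' <;> simp [hi, hne]
  · refine absurd ?_ (hP' j hjJ)
    convert hgcd using 2
    ext i
    by_cases hi : i ∈ S'
    · simp [hi, hS' hi]
    · simp [hi, (ne_of_mem_of_not_mem hjJ hj₀).symm]

lemma HasCoprimePart.setGcd_lcm_eq_one {J : Finset (Fin d)} {j₀ : Fin d} (hj₀ : j₀ ∉ J)
    (h : HasCoprimePart R S (insert j₀ J)) :
    Nat.setGcd {m | ∃ S' ⊆ S, HasCoprimePart R S' J ∧ S'.lcm (R · j₀) = m} = 1 := by
  classical
  refine Nat.eq_one_iff_not_exists_prime_dvd.2 fun p hp hdvd => ?_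
  rcases h.or_gcd_sdiff_eq_one hj₀ (Finset.filter_subset (fun i => ¬ p ∣ R i j₀) S)
    with hcop | hgcd
  · obtain ⟨i, hi, hpi⟩ := (hp.prime.dvd_finsetProd_iff _).1 <|
      (Nat.dvd_setGcd_iff.1 hdvd _ ⟨_, Finset.filter_subset _ _, hcop, rfl⟩).trans
        (Finset.lcm_dvd_prod _ _)
    exact (Finset.mem_filter.1 hi).2 hpi
  · refine hp.one_lt.ne' (Nat.dvd_one.1 (hgcd ▸ Finset.dvd_gcd fun i hi => ?_))
    simp only [Finset.mem_sdiff, Finset.mem_filter, not_and, not_not] at hi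
    exact hi.2 hi.1

theorem HasCoprimePart.eventually_tiledByBoxes (J : Finset (Fin d)) :
    ∀ S, HasCoprimePart R S J → ∀ᶠ N in atTop, ∀ ℓ : Fin d → ℕ, (∀ j ∈ J, N ≤ ℓ j) →
      (∀ j ∉ J, S.lcm (R · j) ∣ ℓ j) → TiledByBoxes R ℓ := by
  classical
  induction J using Finset.induction_on with
  | empty =>
    intro S h
    obtain ⟨i, hi⟩ := h.exists_dvd_lcm
    exact .of_forall fun _ ℓ _ hℓ =>
      .of_dvd i fun j => (hi j).trans (hℓ j (Finset.notMem_empty j))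
  | insert j₀ J hj₀ ih =>
    intro S h
    obtain ⟨M, hM⟩ := Nat.exists_mem_closure_of_ge
      {m | ∃ S' ⊆ S, HasCoprimePart R S' J ∧ S'.lcm (R · j₀) = m}
    have hJ : ∀ᶠ N in atTop, ∀ S', HasCoprimePart R S' J → ∀ ℓ : Fin d → ℕ,
        (∀ j ∈ J, N ≤ ℓ j) → (∀ j ∉ J, S'.lcm (R · j) ∣ ℓ j) → TiledByBoxes R ℓ :=
      eventually_all.2 fun S' => eventually_imp_distrib_left.2 (ih S')
    filter_upwards [hJ, eventually_ge_atTop M] with N hN hMN ℓ hℓN hℓ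
    have hclosure : AddSubmonoid.closure
        {m | ∃ S' ⊆ S, HasCoprimePart R S' J ∧ S'.lcm (R · j₀) = m} ≤ tiledLengths R ℓ j₀ := by
      refine AddSubmonoid.closure_le.2 ?_
      rintro _ ⟨S', hS'S, hS', rfl⟩
      refine hN S' hS' _ (fun j hj => ?_) (fun j hj => ?_)
      · rw [update_of_ne (ne_of_mem_of_not_mem hj hj₀)]
        exact hℓN j (Finset.mem_insert_of_mem hj)
      · rcases eq_or_ne j j₀ with rfl | hne
        · simp
        · rw [update_of_ne hne]
          exact (Finset.lcm_mono hS'S).trans (hℓ j (by simp [hne, hj]))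
    simpa [tiledLengths] using hclosure <| hM _ (hMN.trans (hℓN j₀ (Finset.mem_insert_self _ _)))
      (by simp [h.setGcd_lcm_eq_one hj₀])

end CoprimePart

theorem tiles_all_large_boxes_general (d k : ℕ) (R : Fin k → Fin d → ℕ)
    (hgcd : ∀ P : Fin k → Fin d, ∃ j : Fin d,
      (Finset.univ.filter fun i => P i = j).gcd (fun i => R i j) = 1) :
    ∃ k₀ : ℕ, ∀ ℓ : Fin d → ℕ, (∀ j, k₀ ≤ ℓ j) → TiledByBoxes R ℓ := by
  have h : HasCoprimePart R Finset.univ Finset.univ := fun P _ => by simpa using hgcd P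
  obtain ⟨k₀, hk₀⟩ := (h.eventually_tiledByBoxes _ _).exists
  exact ⟨k₀, fun ℓ hℓ => hk₀ ℓ (fun j _ => hℓ j) (fun j hj => absurd (Finset.mem_univ j) hj)⟩

/-- Let `𝓡 = {R 0, …, R (k-1)}` be a finite collection of `d`-dimensional
boxes with positive integer sidelengths. If for every partition of `𝓡` into `d` (possibly
empty) parts `A₁ ⊔ ⋯ ⊔ A_d` there is some `j` with `gcd (n_j(R) : R ∈ A_j) = 1` (the gcd
of the empty set being `0`), then there is `k₀` such that every box all of whose sidelengths
are at least `k₀` can be tiled by translates of boxes from `𝓡`. -/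
theorem tiles_all_large_boxes (d k : ℕ) (hd : 0 < d) (R : Fin k → Fin d → ℕ)
    (hpos : ∀ i j, 0 < R i j)
    (hgcd : ∀ P : Fin k → Fin d, ∃ j : Fin d,
      (Finset.univ.filter fun i => P i = j).gcd (fun i => R i j) = 1) :
    ∃ k₀ : ℕ, ∀ ℓ : Fin d → ℕ, (∀ j, k₀ ≤ ℓ j) → TiledByBoxes R ℓ :=
  tiles_all_large_boxes_general d k R hgcd
end

section
/- Let $X \subseteq \mathcal{A}^{\mathbb{Z}^d}$ ($d \geq 2$, $\mathcal{A}$ finite) be a strongly irreducible subshift with strong irreducibility constant $k$, and let $c : X \times \mathbb{Z}^d \to G$ be a continuous cocycle into a finitely generated group $G$. Then there exists a constant $K$ such that: (1) for all $x, y \in X$ and $u \in \mathbb{Z}^d$ there exist $g_1, g_2 \in G$ with $|g_1|, |g_2| < K$ and $c(x, u) = g_1 \, c(y, u) \, g_2$; and (2) for all $x \in X$ and $v, w \in \mathbb{Z}^d$ there exist $g_1, g_2 \in G$ with $|g_1|, |g_2| < K$ and $c(x, v+w) = c(x,v) \, g_1 \, c(x,w) \, g_2$. In particular, $\sup_{x,y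 \in X, v \in \mathbb{Z}^d} \big| |c(x,v)| - |c(y,v)| \big| < \infty$. -/
/-- The `ℓ¹` (graph) distance on `ℤ^d`. -/
def dOne {d : ℕ} (v w : Fin d → ℤ) : ℕ :=
  ∑ i, (v i - w i).natAbs

section WordLength

variable {G : Type*} [Group G] {S : Set G}

theorem wordLength_prod_le_length {l : List G} (hl : ∀ s ∈ l, s ∈ S) :
    wordLength S l.prod ≤ l.length :=
  Nat.sInf_le ⟨l.get, fun i => hl _ (l.get_mem i), by rw [List.ofFn_get]⟩

theorem exists_list_prod_eq_and_length_eq_wordLength (hsym : ∀ s ∈ S, s⁻¹ ∈ S)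
    (hgen : Subgroup.closure S = ⊤) (g : G) :
    ∃ l : List G, (∀ s ∈ l, s ∈ S) ∧ l.prod = g ∧ l.length = wordLength S g := by
  have hg : g ∈ Submonoid.closure (S ∪ S⁻¹) := by
    rw [← Subgroup.closure_toSubmonoid, hgen]; trivial
  obtain ⟨l, hlS, rfl⟩ := Submonoid.exists_list_of_mem_closure hg
  have hl : ∀ s ∈ l, s ∈ S := fun s hs =>
    (hlS s hs).elim id fun h => by simpa using hsym _ h
  have hne : {n | ∃ f : Fin n → G, (∀ i, f i ∈ S) ∧ (List.ofFn f).prod = l.prod}.Nonempty :=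
    ⟨l.length, l.get, fun i => hl _ (l.get_mem i), by rw [List.ofFn_get]⟩
  obtain ⟨f, hf, hprod⟩ := Nat.sInf_mem hne
  exact ⟨List.ofFn f, by simpa using hf, hprod, List.length_ofFn⟩

theorem wordLength_one : wordLength S (1 : G) = 0 :=
  Nat.le_zero.1 (wordLength_prod_le_length (l := []) (by simp))

theorem wordLength_mul_le (hsym : ∀ s ∈ S, s⁻¹ ∈ S) (hgen : Subgroup.closure S = ⊤)
    (g h : G) : wordLength S (g * h) ≤ wordLength S g + wordLength S h := by
  obtain ⟨l, hl, rfl, hlen⟩ := exists_list_prod_eq_and_length_eq_wordLength hsym hgen g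
  obtain ⟨l', hl', rfl, hlen'⟩ := exists_list_prod_eq_and_length_eq_wordLength hsym hgen h
  rw [← hlen, ← hlen', ← List.prod_append, ← List.length_append]
  exact wordLength_prod_le_length fun s hs => (List.mem_append.1 hs).elim (hl s) (hl' s)

theorem wordLength_inv_le (hsym : ∀ s ∈ S, s⁻¹ ∈ S) (hgen : Subgroup.closure S = ⊤) (g : G) :
    wordLength S g⁻¹ ≤ wordLength S g := by
  obtain ⟨l, hl, rfl, hlen⟩ := exists_list_prod_eq_and_length_eq_wordLength hsym hgen g
  rw [← hlen, List.prod_inv_reverse]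
  refine (wordLength_prod_le_length fun s hs => ?_).trans (by simp)
  obtain ⟨t, ht, rfl⟩ := List.mem_map.1 (List.mem_reverse.1 hs)
  exact hsym t (hl t ht)

theorem wordLength_mul_inv_le (hsym : ∀ s ∈ S, s⁻¹ ∈ S) (hgen : Subgroup.closure S = ⊤)
    (g h : G) : wordLength S (g * h⁻¹) ≤ wordLength S g + wordLength S h :=
  (wordLength_mul_le hsym hgen g h⁻¹).trans (Nat.add_le_add_left (wordLength_inv_le hsym hgen h) _)

theorem wordLength_mul_mul_le (hsym : ∀ s ∈ S, s⁻¹ ∈ S) (hgen : Subgroup.closure S = ⊤)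
    (g₁ h g₂ : G) :
    wordLength S (g₁ * h * g₂) ≤ wordLength S g₁ + wordLength S h + wordLength S g₂ :=
  (wordLength_mul_le hsym hgen _ g₂).trans
    (Nat.add_le_add_right (wordLength_mul_le hsym hgen g₁ h) _)

end WordLength

theorem IsCompact.exists_forall_le_of_forall_continuousOn {κ Y B : Type*} [TopologicalSpace Y]
    [TopologicalSpace B] [DiscreteTopology B] {X : Set Y} (hX : IsCompact X) {φ : κ → Y → B}
    (hφ : ∀ i, ContinuousOn (φ i) X) (E : Finset κ) (f : B → ℕ) :
    ∃ L, ∀ i ∈ E, ∀ x ∈ X, f (φ i x) ≤ L := by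
  choose L hL using fun i =>
    ((hX.image_of_continuousOn (hφ i)).finite_of_discrete.image f).bddAbove
  exact ⟨E.sup L, fun i hi x hx =>
    (hL i ⟨_, ⟨x, hx, rfl⟩, rfl⟩).trans (Finset.le_sup (f := L) hi)⟩

section Window

variable {ι A B : Type*} [TopologicalSpace A] [TopologicalSpace B] [DiscreteTopology B]
  {X : Set (ι → A)}

theorem ContinuousWithinAt.exists_finset_forall_eq {φ : (ι → A) → B} {x : ι → A}
    (hφ : ContinuousWithinAt φ X x) :
    ∃ I : Finset ι, ∀ y ∈ X, (∀ n ∈ I, y n = x n) → φ y = φ x := by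
  obtain ⟨U, hU, hUφ⟩ := mem_nhdsWithin_iff_exists_mem_nhds_inter.1
    (hφ (isOpen_discrete {φ x} |>.mem_nhds rfl))
  rw [nhds_pi, Filter.mem_pi'] at hU
  obtain ⟨I, t, ht, hIt⟩ := hU
  refine ⟨I, fun y hy hyx => hUφ ⟨hIt fun n hn => ?_, hy⟩⟩
  rw [hyx n hn]
  exact mem_of_mem_nhds (ht n)

variable [DiscreteTopology A]

theorem IsCompact.exists_finset_forall_eq_of_continuousOn {φ : (ι → A) → B}
    (hX : IsCompact X) (hφ : ContinuousOn φ X) :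
    ∃ W : Finset ι, ∀ x ∈ X, ∀ y ∈ X, (∀ n ∈ W, x n = y n) → φ x = φ y := by
  classical
  choose I hI using fun x (hx : x ∈ X) => (hφ x hx).exists_finset_forall_eq
  obtain ⟨t, hXt⟩ := hX.elim_nhds_subcover' (fun x hx => (I x hx : Set ι).pi fun n => {x n})
    fun x hx => set_pi_mem_nhds (I x hx).finite_toSet fun n _ => mem_nhds_discrete.2 rfl
  refine ⟨t.biUnion fun z => I z.1 z.2, fun x hx y hy hxy => ?_⟩
  obtain ⟨z, hzt, hxz⟩ := Set.mem_iUnion₂.1 (hXt hx)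
  have hyz : ∀ n ∈ I z.1 z.2, y n = z.1 n := fun n hn =>
    (hxy n (Finset.mem_biUnion.2 ⟨z, hzt, hn⟩)).symm.trans (hxz n hn)
  rw [hI z.1 z.2 x hx hxz, hI z.1 z.2 y hy hyz]

theorem IsCompact.exists_finset_forall_eq_of_forall_continuousOn {κ : Type*}
    {φ : κ → (ι → A) → B} (hX : IsCompact X) (hφ : ∀ i, ContinuousOn (φ i) X) (E : Finset κ) :
    ∃ W : Finset ι, ∀ i ∈ E, ∀ x ∈ X, ∀ y ∈ X, (∀ n ∈ W, x n = y n) → φ i x = φ i y := by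
  classical
  choose W hW using fun i => hX.exists_finset_forall_eq_of_continuousOn (hφ i)
  exact ⟨E.biUnion W, fun i hi x hx y hy hxy =>
    hW i x hx y hy fun n hn => hxy n (Finset.mem_biUnion.2 ⟨i, hi, hn⟩)⟩

end Window

section Cocycle

variable {V A G : Type*} [AddCommGroup V] [Group G]

def IsShiftInvariant (X : Set (V → A)) : Prop :=
  ∀ x ∈ X, ∀ v : V, (fun u => x (u + v)) ∈ X

def IsCocycle (X : Set (V → A)) (c : (V → A) → V → G) : Prop :=
  ∀ x ∈ X, ∀ v w : V, c x (v + w) = c x v * c (fun u => x (u + v)) w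

namespace IsCocycle

variable {X : Set (V → A)} {c : (V → A) → V → G} {x y z : V → A}

theorem map_zero (hc : IsCocycle X c) (hx : x ∈ X) : c x 0 = 1 := by
  have h := hc x hx 0 0
  simp only [add_zero] at h
  exact mul_eq_left.1 h.symm

theorem mul_shift_comm (hc : IsCocycle X c) (hx : x ∈ X) (v w : V) :
    c x v * c (fun u => x (u + v)) w = c x w * c (fun u => x (u + w)) v := by
  rw [← hc x hx, ← hc x hx, add_comm]

theorem eq_of_forall_isPrefix_eq (hX : IsShiftInvariant X) (hc : IsCocycle X c) {E W : Set V}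
    (hW : ∀ e ∈ E, ∀ x ∈ X, ∀ y ∈ X, (∀ n ∈ W, x n = y n) → c x e = c y e) :
    ∀ l : List V, (∀ e ∈ l, e ∈ E) → ∀ x ∈ X, ∀ y ∈ X,
      (∀ l', l' <+: l → ∀ w ∈ W, x (l'.sum + w) = y (l'.sum + w)) → c x l.sum = c y l.sum
  | [], _, x, hx, y, hy, _ => by simp [hc.map_zero hx, hc.map_zero hy]
  | e :: l, hl, x, hx, y, hy, hxy => by
    have he : c x e = c y e := hW e (hl e List.mem_cons_self) x hx y hy fun n hn => by
      simpa using hxy [] List.nil_prefix n hn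
    rw [List.sum_cons, hc x hx, hc y hy, he]
    congr 1
    refine eq_of_forall_isPrefix_eq hX hc hW l (fun e' he' => hl e' (List.mem_cons_of_mem _ he'))
      _ (hX x hx e) _ (hX y hy e) fun l' hl' w hw => ?_
    have h := hxy (e :: l') (List.prefix_cons_iff.2 (Or.inr ⟨l', rfl, hl'⟩)) w hw
    rw [List.sum_cons, add_comm e, add_right_comm] at h
    exact h

theorem wordLength_list_sum_le (hX : IsShiftInvariant X) (hc : IsCocycle X c) {S : Set G}
    (hsym : ∀ s ∈ S, s⁻¹ ∈ S) (hgen : Subgroup.closure S = ⊤) {E : Set V} {L : ℕ}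
    (hL : ∀ e ∈ E, ∀ x ∈ X, wordLength S (c x e) ≤ L) :
    ∀ l : List V, (∀ e ∈ l, e ∈ E) → ∀ x ∈ X, wordLength S (c x l.sum) ≤ L * l.length
  | [], _, x, hx => by simp [hc.map_zero hx, wordLength_one]
  | e :: l, hl, x, hx => by
    have htail : ∀ e' ∈ l, e' ∈ E := fun e' he' => hl e' (List.mem_cons_of_mem _ he')
    rw [List.sum_cons, hc x hx, List.length_cons, mul_add_one, add_comm (L * _)]
    exact (wordLength_mul_le hsym hgen _ _).trans <|
      add_le_add (hL e (hl e List.mem_cons_self) x hx)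
        (wordLength_list_sum_le hX hc hsym hgen hL l htail _ (hX x hx e))

theorem eq_mul_mul_of_eq_of_shift_eq (hc : IsCocycle X c) (hy : y ∈ X) (hz : z ∈ X) {u b : V}
    (hzx : c z u = c x u) (hzy : c (fun n => z (n + b)) u = c (fun n => y (n + b)) u) :
    c x u = (c z b * (c y b)⁻¹) * c y u *
      (c (fun n => y (n + u)) b * (c (fun n => z (n + u)) b)⁻¹) := by
  rw [← hzx, eq_mul_inv_of_mul_eq (hc.mul_shift_comm hz b u).symm, hzy,
    eq_inv_mul_of_mul_eq (hc.mul_shift_comm hy b u)]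
  group

end IsCocycle

end Cocycle

theorem AddSubmonoid.sum_sub_sum_mem_or_of_isPrefix {M : Type*} [AddCommGroup M]
    {P : AddSubmonoid M} {l l₁ l₂ : List M} (hl : ∀ e ∈ l, e ∈ P) (h₁ : l₁ <+: l)
    (h₂ : l₂ <+: l) : l₂.sum - l₁.sum ∈ P ∨ l₁.sum - l₂.sum ∈ P := by
  have hsub : ∀ {a b : List M}, a <+: b → b <+: l → b.sum - a.sum ∈ P := by
    rintro a _ ⟨t, rfl⟩ hb
    rw [List.sum_append, add_sub_cancel_left]
    exact P.list_sum_mem fun e he => hl e (hb.subset (List.mem_append_right a he))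
  exact (List.prefix_or_prefix_of_prefix h₁ h₂).imp (hsub · h₂) (hsub · h₁)

section Lattice

variable {d : ℕ}

theorem natAbs_sub_le_dOne (v w : Fin d → ℤ) (i : Fin d) : (v i - w i).natAbs ≤ dOne v w :=
  Finset.single_le_sum (f := fun i => (v i - w i).natAbs) (fun _ _ => Nat.zero_le _)
    (Finset.mem_univ i)

theorem dOne_le_dOne_add_add (p q w w' : Fin d → ℤ) :
    dOne p q ≤ dOne (p + w) (q + w') + dOne w 0 + dOne w' 0 := by
  simp only [dOne, ← Finset.sum_add_distrib]
  exact Finset.sum_le_sum fun i _ => by simp only [Pi.add_apply, Pi.zero_apply]; omega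

theorem dOne_add_le (v w : Fin d → ℤ) : dOne (v + w) 0 ≤ dOne v 0 + dOne w 0 := by
  simp only [dOne, ← Finset.sum_add_distrib]
  exact Finset.sum_le_sum fun i _ => by simp only [Pi.add_apply, Pi.zero_apply]; omega

theorem dOne_single (i : Fin d) (a : ℤ) : dOne (Pi.single i a) 0 = a.natAbs := by
  simp [dOne, Pi.single_apply, apply_ite Int.natAbs]

def orthant (s : Fin d → ℤ) : AddSubmonoid (Fin d → ℤ) where
  carrier := {p | ∀ i, 0 ≤ s i * p i}
  add_mem' hp hq i := by simpa [mul_add] using add_nonneg (hp i) (hq i)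
  zero_mem' i := by simp

def signVec (u : Fin d → ℤ) (i : Fin d) : ℤ := if 0 ≤ u i then 1 else -1

theorem signVec_eq_one_or_eq_neg_one (u : Fin d → ℤ) (i : Fin d) :
    signVec u i = 1 ∨ signVec u i = -1 := by
  unfold signVec; split_ifs <;> simp

theorem natAbs_smul_signVec (u : Fin d → ℤ) (i : Fin d) : (u i).natAbs • signVec u i = u i := by
  rw [nsmul_eq_mul, Int.natCast_natAbs, signVec]
  split_ifs with h
  · simp [abs_of_nonneg h]
  · simp [abs_of_neg (not_le.1 h)]

def staircase (u : Fin d → ℤ) : List (Fin d → ℤ) :=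
  (List.finRange d).flatMap fun i => List.replicate (u i).natAbs (Pi.single i (signVec u i))

theorem sum_staircase (u : Fin d → ℤ) : (staircase u).sum = u := by
  simp only [staircase, List.flatMap, List.sum_flatten, List.map_map, Function.comp_def,
    List.sum_replicate, ← Pi.single_nsmul, natAbs_smul_signVec]
  rw [← Fin.sum_univ_def, Finset.univ_sum_single]

theorem length_staircase (u : Fin d → ℤ) : (staircase u).length = dOne u 0 := by
  simp [staircase, dOne, List.length_flatMap, ← Fin.sum_univ_def]

theorem exists_eq_single_of_mem_staircase {u e : Fin d → ℤ} (he : e ∈ staircase u) :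
    ∃ i, e = Pi.single i (signVec u i) := by
  obtain ⟨i, -, he⟩ := List.mem_flatMap.1 he
  exact ⟨i, List.eq_of_mem_replicate he⟩

theorem mem_orthant_of_mem_staircase {u e : Fin d → ℤ} (he : e ∈ staircase u) :
    e ∈ orthant (signVec u) := by
  obtain ⟨i, rfl⟩ := exists_eq_single_of_mem_staircase he
  intro j
  rcases eq_or_ne j i with rfl | hji
  · simp only [Pi.single_eq_same]; rcases signVec_eq_one_or_eq_neg_one u j with h | h <;> simp [h]
  · simp [hji]

def unitSteps (d : ℕ) : Finset (Fin d → ℤ) :=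
  Finset.univ.biUnion fun i => {Pi.single i 1, Pi.single i (-1)}

theorem mem_unitSteps_of_mem_staircase {u e : Fin d → ℤ} (he : e ∈ staircase u) :
    e ∈ unitSteps d := by
  obtain ⟨i, rfl⟩ := exists_eq_single_of_mem_staircase he
  refine Finset.mem_biUnion.2 ⟨i, Finset.mem_univ i, ?_⟩
  rcases signVec_eq_one_or_eq_neg_one u i with h | h <;> simp [h]

theorem le_dOne_add_single_add_single {s : Fin d → ℤ} (hs : ∀ i, s i = 1 ∨ s i = -1)
    {i j : Fin d} (hij : i ≠ j) (m : ℕ) {p q : Fin d → ℤ}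
    (hpq : q - p ∈ orthant s ∨ p - q ∈ orthant s) :
    m ≤ dOne p (q + (Pi.single i (m * s i) + Pi.single j (-(m * s j)))) := by
  rcases hpq with h | h
  · have hi : 0 ≤ s i * (q i - p i) := h i
    refine le_trans ?_ (natAbs_sub_le_dOne _ _ i)
    simp only [Pi.add_apply, Pi.single_eq_same, Pi.single_eq_of_ne hij, add_zero]
    rcases hs i with h1 | h1 <;> rw [h1] at hi ⊢ <;> omega
  · have hj : 0 ≤ s j * (p j - q j) := h j
    refine le_trans ?_ (natAbs_sub_le_dOne _ _ j)
    simp only [Pi.add_apply, Pi.single_eq_same, Pi.single_eq_of_ne hij.symm, zero_add]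
    rcases hs j with h1 | h1 <;> rw [h1] at hj ⊢ <;> omega

/-- `b` is `m` times a unit vector pointing along the orthant of `u` in one coordinate and against
it in another; prefix sums of the staircase are comparable in that orthant, so their difference
is `m`-far from `b` in one of the two coordinates. -/
theorem exists_dOne_le_forall_le_dOne (hd : 2 ≤ d) (u : Fin d → ℤ) (m : ℕ) :
    ∃ b : Fin d → ℤ, dOne b 0 ≤ 2 * m ∧ ∀ l₁, l₁ <+: staircase u → ∀ l₂, l₂ <+: staircase u →
      m ≤ dOne l₁.sum (l₂.sum + b) := by
  obtain ⟨i, j, hij⟩ : ∃ i j : Fin d, i ≠ j := ⟨⟨0, by omega⟩, ⟨1, by omega⟩, by simp⟩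
  have hs := signVec_eq_one_or_eq_neg_one u
  have hm : ∀ i, (m * signVec u i).natAbs = m := fun i => by rcases hs i with h | h <;> simp [h]
  refine ⟨Pi.single i (m * signVec u i) + Pi.single j (-(m * signVec u j)), ?_,
    fun l₁ h₁ l₂ h₂ => ?_⟩
  · refine (dOne_add_le _ _).trans ?_
    rw [dOne_single, dOne_single, Int.natAbs_neg, hm, hm, two_mul]
  · have hchain := AddSubmonoid.sum_sub_sum_mem_or_of_isPrefix (P := orthant (signVec u))
      (fun e he => mem_orthant_of_mem_staircase he) h₁ h₂
    exact le_dOne_add_single_add_single hs hij m hchain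

end Lattice

def IsStronglyIrreducible {A : Type*} {d : ℕ} (X : Set ((Fin d → ℤ) → A)) (k : ℕ) : Prop :=
  ∀ F F' : Set (Fin d → ℤ), (∀ u ∈ F, ∀ w ∈ F', k < dOne u w) →
    ∀ x ∈ X, ∀ y ∈ X, ∃ z ∈ X, (∀ u ∈ F, z u = x u) ∧ ∀ u ∈ F', z u = y u

namespace IsCocycle

variable {A G : Type*} [Group G] {d : ℕ} {X : Set ((Fin d → ℤ) → A)}
  {c : ((Fin d → ℤ) → A) → (Fin d → ℤ) → G} {S : Set G}

theorem wordLength_le_mul_dOne (hX : IsShiftInvariant X) (hc : IsCocycle X c)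
    (hsym : ∀ s ∈ S, s⁻¹ ∈ S) (hgen : Subgroup.closure S = ⊤) {L : ℕ}
    (hL : ∀ e ∈ unitSteps d, ∀ x ∈ X, wordLength S (c x e) ≤ L) {x : (Fin d → ℤ) → A}
    (hx : x ∈ X) (v : Fin d → ℤ) : wordLength S (c x v) ≤ L * dOne v 0 := by
  simpa [sum_staircase, length_staircase] using hc.wordLength_list_sum_le hX hsym hgen
    (E := unitSteps d) hL (staircase v) (fun e he => mem_unitSteps_of_mem_staircase he) x hx

theorem exists_eq_mul_mul_of_isStronglyIrreducible (hd : 2 ≤ d) (hX : IsShiftInvariant X)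
    {k : ℕ} (hSI : IsStronglyIrreducible X k) (hc : IsCocycle X c) (hsym : ∀ s ∈ S, s⁻¹ ∈ S)
    (hgen : Subgroup.closure S = ⊤) {W : Finset (Fin d → ℤ)}
    (hW : ∀ e ∈ unitSteps d, ∀ x ∈ X, ∀ y ∈ X, (∀ n ∈ W, x n = y n) → c x e = c y e)
    {r : ℕ} (hr : ∀ w ∈ W, dOne w 0 ≤ r) {L : ℕ}
    (hL : ∀ x ∈ X, ∀ v, wordLength S (c x v) ≤ L * dOne v 0)
    {x y : (Fin d → ℤ) → A} (hx : x ∈ X) (hy : y ∈ X) (u : Fin d → ℤ) :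
    ∃ g₁ g₂ : G, wordLength S g₁ ≤ 4 * L * (k + 2 * r + 1) ∧
      wordLength S g₂ ≤ 4 * L * (k + 2 * r + 1) ∧ c x u = g₁ * c y u * g₂ := by
  obtain ⟨b, hb, hsep⟩ := exists_dOne_le_forall_le_dOne hd u (k + 2 * r + 1)
  obtain ⟨z, hz, hzx, hzy⟩ := hSI
    {n | ∃ l, l <+: staircase u ∧ ∃ w ∈ W, n = l.sum + w}
    {n | ∃ l, l <+: staircase u ∧ ∃ w ∈ W, n = l.sum + b + w}
    (by
      rintro _ ⟨l₁, h₁, w, hw, rfl⟩ _ ⟨l₂, h₂, w', hw', rfl⟩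
      have := dOne_le_dOne_add_add l₁.sum (l₂.sum + b) w w'
      have := hsep l₁ h₁ l₂ h₂
      have := hr w hw
      have := hr w' hw'
      omega)
    x hx y hy
  have hpath := hc.eq_of_forall_isPrefix_eq hX (E := unitSteps d) (W := W) hW
    (staircase u) fun e he => mem_unitSteps_of_mem_staircase he
  have hzx' : c z u = c x u := by
    simpa [sum_staircase] using
      hpath z hz x hx fun l hl w hw => hzx _ ⟨l, hl, w, hw, rfl⟩
  have hzy' : c (fun n => z (n + b)) u = c (fun n => y (n + b)) u := by
    simpa [sum_staircase] using hpath _ (hX z hz b) _ (hX y hy b)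
      fun l hl w hw => hzy _ ⟨l, hl, w, hw, add_right_comm _ _ _⟩
  have hcb : ∀ x ∈ X, wordLength S (c x b) ≤ 2 * L * (k + 2 * r + 1) := fun x hx =>
    (hL x hx b).trans (by nlinarith)
  refine ⟨_, _, ?_, ?_, hc.eq_mul_mul_of_eq_of_shift_eq hy hz hzx' hzy'⟩
  · exact (wordLength_mul_inv_le hsym hgen _ _).trans (by linarith [hcb z hz, hcb y hy])
  · exact (wordLength_mul_inv_le hsym hgen _ _).trans
      (by linarith [hcb _ (hX z hz u), hcb _ (hX y hy u)])

end IsCocycle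

theorem cocycle_comparison_on_SI_subshift_general {A : Type*} [Fintype A]
    [TopologicalSpace A] [DiscreteTopology A] (d : ℕ) (hd : 2 ≤ d)
    {G : Type*} [Group G] [TopologicalSpace G] [DiscreteTopology G]
    (S₀ : Set G) (hS₀sym : ∀ s ∈ S₀, s⁻¹ ∈ S₀)
    (hS₀gen : Subgroup.closure S₀ = ⊤)
    (X : Set ((Fin d → ℤ) → A)) (hclosed : IsClosed X)
    (hshift : ∀ x ∈ X, ∀ v : Fin d → ℤ, (fun u => x (u + v)) ∈ X)
    (k : ℕ)
    (hSI : ∀ F F' : Set (Fin d → ℤ),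
      (∀ u ∈ F, ∀ w ∈ F', k < dOne u w) →
      ∀ x ∈ X, ∀ y ∈ X, ∃ z ∈ X, (∀ u ∈ F, z u = x u) ∧ ∀ u ∈ F', z u = y u)
    (c : ((Fin d → ℤ) → A) → (Fin d → ℤ) → G)
    (hcont : ∀ v : Fin d → ℤ, ContinuousOn (fun x => c x v) X)
    (hcoc : ∀ x ∈ X, ∀ v w : Fin d → ℤ,
      c x (v + w) = c x v * c (fun u => x (u + v)) w) :
    ∃ K : ℕ,
      (∀ x ∈ X, ∀ y ∈ X, ∀ u : Fin d → ℤ, ∃ g₁ g₂ : G,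
        wordLength S₀ g₁ < K ∧ wordLength S₀ g₂ < K ∧
        c x u = g₁ * c y u * g₂) ∧
      (∀ x ∈ X, ∀ v w : Fin d → ℤ, ∃ g₁ g₂ : G,
        wordLength S₀ g₁ < K ∧ wordLength S₀ g₂ < K ∧
        c x (v + w) = c x v * g₁ * c x w * g₂) ∧
      ∃ D : ℕ, ∀ x ∈ X, ∀ y ∈ X, ∀ v : Fin d → ℤ,
        |(wordLength S₀ (c x v) : ℤ) - (wordLength S₀ (c y v) : ℤ)| ≤ D := by
  have hc : IsCocycle X c := hcoc
  obtain ⟨W, hW⟩ :=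
    hclosed.isCompact.exists_finset_forall_eq_of_forall_continuousOn hcont (unitSteps d)
  obtain ⟨L, hL⟩ :=
    hclosed.isCompact.exists_forall_le_of_forall_continuousOn hcont (unitSteps d) (wordLength S₀)
  set N := 4 * L * (k + 2 * (W.sup fun w => dOne w 0) + 1)
  have hconj : ∀ x ∈ X, ∀ y ∈ X, ∀ u, ∃ g₁ g₂ : G,
      wordLength S₀ g₁ ≤ N ∧ wordLength S₀ g₂ ≤ N ∧ c x u = g₁ * c y u * g₂ :=
    fun x hx y hy u => hc.exists_eq_mul_mul_of_isStronglyIrreducible hd hshift hSI hS₀sym hS₀gen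
      hW (fun w hw => Finset.le_sup (f := fun w => dOne w 0) hw)
      (fun x hx => hc.wordLength_le_mul_dOne hshift hS₀sym hS₀gen hL hx) hx hy u
  refine ⟨N + 1, fun x hx y hy u => ?_, fun x hx v w => ?_, 2 * N, fun x hx y hy v => ?_⟩
  · obtain ⟨g₁, g₂, h₁, h₂, h⟩ := hconj x hx y hy u
    exact ⟨g₁, g₂, by omega, by omega, h⟩
  · obtain ⟨g₁, g₂, h₁, h₂, h⟩ := hconj _ (hshift x hx v) x hx w
    exact ⟨g₁, g₂, by omega, by omega, by rw [hc x hx, h]; group⟩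
  · obtain ⟨g₁, g₂, h₁, h₂, h⟩ := hconj x hx y hy v
    obtain ⟨g₁', g₂', h₁', h₂', h'⟩ := hconj y hy x hx v
    have hxy := wordLength_mul_mul_le hS₀sym hS₀gen g₁ (c y v) g₂
    have hyx := wordLength_mul_mul_le hS₀sym hS₀gen g₁' (c x v) g₂'
    rw [← h] at hxy
    rw [← h'] at hyx
    rw [abs_le]
    omega

/-- Let `X ⊆ 𝒜^{ℤ^d}` (`d ≥ 2`, `𝒜` finite) be a strongly irreducible
subshift with SI constant `k`, and `c : X × ℤ^d → G` a continuous cocycle into a finitely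
generated group `G` with word length `|·|`. There is a constant `K` such that:
(1) for `x, y ∈ X` and `u ∈ ℤ^d` there are `g₁, g₂` with `|g₁|, |g₂| < K` and
`c x u = g₁ * c y u * g₂`;
(2) for `x ∈ X` and `v, w ∈ ℤ^d` there are `g₁, g₂` with `|g₁|, |g₂| < K` and
`c x (v + w) = c x v * g₁ * c x w * g₂`.
In particular `sup_{x,y,v} ||c x v| - |c y v|| < ∞`. -/
theorem cocycle_comparison_on_SI_subshift {A : Type*} [Fintype A]
    [TopologicalSpace A] [DiscreteTopology A] (d : ℕ) (hd : 2 ≤ d)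
    {G : Type*} [Group G] [TopologicalSpace G] [DiscreteTopology G]
    (S₀ : Set G) (hS₀fin : S₀.Finite) (hS₀sym : ∀ s ∈ S₀, s⁻¹ ∈ S₀)
    (hS₀gen : Subgroup.closure S₀ = ⊤)
    (X : Set ((Fin d → ℤ) → A)) (hclosed : IsClosed X)
    (hshift : ∀ x ∈ X, ∀ v : Fin d → ℤ, (fun u => x (u + v)) ∈ X)
    (k : ℕ)
    (hSI : ∀ F F' : Set (Fin d → ℤ),
      (∀ u ∈ F, ∀ w ∈ F', k < dOne u w) →
      ∀ x ∈ X, ∀ y ∈ X, ∃ z ∈ X, (∀ u ∈ F, z u = x u) ∧ ∀ u ∈ F', z u = y u)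
    (c : ((Fin d → ℤ) → A) → (Fin d → ℤ) → G)
    (hcont : ∀ v : Fin d → ℤ, ContinuousOn (fun x => c x v) X)
    (hcoc : ∀ x ∈ X, ∀ v w : Fin d → ℤ,
      c x (v + w) = c x v * c (fun u => x (u + v)) w) :
    ∃ K : ℕ,
      (∀ x ∈ X, ∀ y ∈ X, ∀ u : Fin d → ℤ, ∃ g₁ g₂ : G,
        wordLength S₀ g₁ < K ∧ wordLength S₀ g₂ < K ∧
        c x u = g₁ * c y u * g₂) ∧
      (∀ x ∈ X, ∀ v w : Fin d → ℤ, ∃ g₁ g₂ : G,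
        wordLength S₀ g₁ < K ∧ wordLength S₀ g₂ < K ∧
        c x (v + w) = c x v * g₁ * c x w * g₂) ∧
      ∃ D : ℕ, ∀ x ∈ X, ∀ y ∈ X, ∀ v : Fin d → ℤ,
        |(wordLength S₀ (c x v) : ℤ) - (wordLength S₀ (c y v) : ℤ)| ≤ D :=
  cocycle_comparison_on_SI_subshift_general d hd S₀ hS₀sym hS₀gen X hclosed hshift k hSI c hcont
    hcoc
end
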